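/- arXiv:2303.04260 — 5 statements merged into one kernel-verified Lean document; each statement's English description precedes it below -/
import Mathlib

section
/- Let {Λ_t : t ∈ ℝ₊} be a family of trace preserving, Hermiticity preserving linear maps on M_d(ℂ) (e.g. a D-divisible trace preserving family). If lim_{t→∞} Σ_{i,j=1}^{d} ‖Λ_t(E_{ij})‖²_HS exists and is strictly less than d²/(d²−1), then the family is asymptotically CP: there exists t₀ > 0 such that Λ_t is completely positive for all t ≥ t₀. -/
open Matrix Set Filter
open scoped ComplexConjugate ComplexOrder

/-- Square complex matrices of size `d`. -/
abbrev Mat (d : ℕ) := Matrix (Fin d) (Fin d) ℂ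

/-- Linear maps on `M_d(ℂ)`. -/
abbrev MatMap (d : ℕ) := Mat d →ₗ[ℂ] Mat d

/-- The Choi matrix `C_φ = Σ_{i,j} E_{ij} ⊗ φ(E_{ij})` of a linear map `φ` on `M_d(ℂ)`. -/
noncomputable def choiMatrix {d : ℕ} (φ : MatMap d) :
    Matrix (Fin d × Fin d) (Fin d × Fin d) ℂ :=
  Matrix.of fun p q => φ (Matrix.single p.1 q.1 1) p.2 q.2

/-- A map is completely positive iff its Choi matrix is positive semidefinite. -/
def IsCP {d : ℕ} (φ : MatMap d) : Prop := (choiMatrix φ).PosSemidef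

/-- Trace preserving linear map. -/
def IsTP {d : ℕ} (φ : MatMap d) : Prop := ∀ a : Mat d, (φ a).trace = a.trace

/-- Hermiticity preserving linear map. -/
def IsHP {d : ℕ} (φ : MatMap d) : Prop := ∀ a : Mat d, φ aᴴ = (φ a)ᴴ

/-- The transposition map `θ : a ↦ aᵀ` as a linear map on `M_d(ℂ)`. -/
def transposeMap (d : ℕ) : MatMap d where
  toFun a := aᵀ
  map_add' a b := by ext i j; simp
  map_smul' c a := by ext i j; simp

/-- A map is decomposable if it is a sum of a CP map and `θ` composed with a CP map. -/
def IsDecomposable {d : ℕ} (φ : MatMap d) : Prop :=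
  ∃ ψ₁ ψ₂ : MatMap d, IsCP ψ₁ ∧ IsCP ψ₂ ∧ φ = ψ₁ + transposeMap d ∘ₗ ψ₂
/-- The Hermitian Hilbert–Schmidt orthonormal basis `{F_i}` of `M_d(ℂ)` from the paper:
Hermitian, orthonormal, traceless except the last element `F_{d²} = I/√d`, ordered with
symmetric off-diagonal matrices first, then antisymmetric ones, then diagonal ones. -/
def IsOrderedHermBasis (d : ℕ) (F : Fin (d ^ 2) → Mat d) : Prop :=
  (∀ i, (F i).IsHermitian) ∧
  (∀ i j, (F i * F j).trace = if i = j then 1 else 0) ∧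
  (∀ i : Fin (d ^ 2), (i : ℕ) + 1 < d ^ 2 → (F i).trace = 0) ∧
  (∀ i : Fin (d ^ 2), (i : ℕ) + 1 = d ^ 2 →
    F i = ((Real.sqrt d : ℂ))⁻¹ • (1 : Mat d)) ∧
  (∀ i : Fin (d ^ 2), (i : ℕ) < d * (d - 1) / 2 → (F i)ᵀ = F i) ∧
  (∀ i : Fin (d ^ 2), d * (d - 1) / 2 ≤ (i : ℕ) → (i : ℕ) < d * (d - 1) → (F i)ᵀ = -(F i)) ∧
  (∀ i : Fin (d ^ 2), d * (d - 1) ≤ (i : ℕ) → ∀ j k : Fin d, j ≠ k → F i j k = 0)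

/-- The signs `θ_i`: `-1` on the antisymmetric block, `+1` otherwise. -/
def thetaCoef (d : ℕ) (i : Fin (d ^ 2)) : ℂ :=
  if d * (d - 1) / 2 ≤ (i : ℕ) ∧ (i : ℕ) < d * (d - 1) then -1 else 1

/-- The coefficients `ξ_{ijk} = tr(F_i F_j F_k)`. -/
noncomputable def xiCoef {d : ℕ} (F : Fin (d ^ 2) → Mat d) (i j k : Fin (d ^ 2)) : ℂ :=
  (F i * F j * F k).trace

/-- The geometric tensor `Ω_{μν}^{jk} = Σ_i θ_i ξ_{ijμ} conj(ξ_{ikν})`. -/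
noncomputable def Omega {d : ℕ} (F : Fin (d ^ 2) → Mat d)
    (μ ν j k : Fin (d ^ 2)) : ℂ :=
  ∑ i : Fin (d ^ 2), thetaCoef d i * xiCoef F i j μ * conj (xiCoef F i k ν)

/-- Embedding of the first `d²-1` indices into `Fin (d²)`. -/
def embIdx (d : ℕ) (μ : Fin (d ^ 2 - 1)) : Fin (d ^ 2) := Fin.castLE (Nat.sub_le _ _) μ

/-- The Lindblad-like form `ρ ↦ −i[H,ρ] + Σ_{μ,ν<d²} c_{μν}(F_μ ρ F_ν − ½{F_ν F_μ, ρ})`. -/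
noncomputable def gksForm {d : ℕ} (F : Fin (d ^ 2) → Mat d) (H : Mat d)
    (c : Matrix (Fin (d ^ 2 - 1)) (Fin (d ^ 2 - 1)) ℂ) (ρ : Mat d) : Mat d :=
  (-Complex.I) • (H * ρ - ρ * H) +
    ∑ μ : Fin (d ^ 2 - 1), ∑ ν : Fin (d ^ 2 - 1),
      c μ ν • (F (embIdx d μ) * ρ * F (embIdx d ν) -
        (2⁻¹ : ℂ) • (F (embIdx d ν) * F (embIdx d μ) * ρ +
          ρ * (F (embIdx d ν) * F (embIdx d μ))))

/-- D-divisibility of a family of maps in `[t₁,t₂]`: the propagator `V_{t,s} = X_{t,s} + θ∘Y_{t,s}`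
is trace preserving and decomposable, with CP parts `X`, `Y` continuous in `(t,s)`. -/
def IsDDivisible {d : ℕ} (Λ : ℝ → MatMap d) (t₁ t₂ : ℝ) : Prop :=
  ∃ X Y : ℝ → ℝ → MatMap d,
    (∀ t ∈ Icc t₁ t₂, ∀ s ∈ Icc t₁ t,
      IsCP (X t s) ∧ IsCP (Y t s) ∧
      IsTP (X t s + transposeMap d ∘ₗ Y t s) ∧
      Λ t = (X t s + transposeMap d ∘ₗ Y t s) ∘ₗ Λ s) ∧
    (∀ a : Mat d, ContinuousOn (fun p : ℝ × ℝ => X p.1 p.2 a)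
      {p : ℝ × ℝ | p.1 ∈ Icc t₁ t₂ ∧ p.2 ∈ Icc t₁ p.1}) ∧
    (∀ a : Mat d, ContinuousOn (fun p : ℝ × ℝ => Y p.1 p.2 a)
      {p : ℝ × ℝ | p.1 ∈ Icc t₁ t₂ ∧ p.2 ∈ Icc t₁ p.1})

/-- The exponential of a linear map on `M_d(ℂ)`, computed through its matrix
representation in the standard basis. -/
noncomputable def endExp {d : ℕ} (f : MatMap d) : MatMap d :=
  (LinearMap.toMatrix (Matrix.stdBasis ℂ (Fin d) (Fin d))
      (Matrix.stdBasis ℂ (Fin d) (Fin d))).symm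
    (NormedSpace.exp
      (LinearMap.toMatrix (Matrix.stdBasis ℂ (Fin d) (Fin d))
        (Matrix.stdBasis ℂ (Fin d) (Fin d)) f))

/-- `φ'` is the trace-dual of `φ`: `tr(a φ(b)) = tr(φ'(a) b)` for all `a`, `b`. -/
def IsTraceDual {d : ℕ} (φ φ' : MatMap d) : Prop :=
  ∀ a b : Mat d, (a * φ b).trace = (φ' a * b).trace

/-- Positive map: maps positive semidefinite matrices to positive semidefinite matrices. -/
def IsPosMap {d : ℕ} (φ : MatMap d) : Prop :=
  ∀ a : Mat d, a.PosSemidef → (φ a).PosSemidef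

/-- Squared Hilbert–Schmidt norm `‖a‖²_HS = tr(a†a)` (a real number). -/
noncomputable def hsNormSq {d : ℕ} (a : Mat d) : ℝ := ((aᴴ * a).trace).re


section AuxCP

open Matrix

private theorem trace_eq_sum_eig' {n : Type*} [Fintype n] [DecidableEq n] {A : Matrix n n ℂ}
    (hA : A.IsHermitian) : A.trace = ∑ i, (hA.eigenvalues i : ℂ) := by
  have h := (Matrix.mem_unitaryGroup_iff').mp (hA.eigenvectorUnitary).2
  conv_lhs => rw [hA.spectral_theorem, Unitary.conjStarAlgAut_apply]
  rw [Matrix.trace_mul_cycle, h, one_mul]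
  simp [Matrix.trace_diagonal]

private theorem trace_sq_eq_sum_eig' {n : Type*} [Fintype n] [DecidableEq n] {A : Matrix n n ℂ}
    (hA : A.IsHermitian) : (A * A).trace = ∑ i, ((hA.eigenvalues i : ℂ))^2 := by
  have h := (Matrix.mem_unitaryGroup_iff').mp (hA.eigenvectorUnitary).2
  have h2 : ∀ x : Matrix n n ℂ, star (hA.eigenvectorUnitary : Matrix n n ℂ) *
      ((hA.eigenvectorUnitary : Matrix n n ℂ) * x) = x := by
    intro x; rw [← mul_assoc, h, one_mul]
  conv_lhs => rw [hA.spectral_theorem, Unitary.conjStarAlgAut_apply]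
  rw [Matrix.trace_mul_cycle]
  simp only [mul_assoc, h2, h, mul_one]
  rw [Matrix.trace_mul_comm]
  simp only [mul_assoc, h, mul_one]
  rw [Matrix.diagonal_mul_diagonal]
  simp [Matrix.trace_diagonal, sq]

private theorem all_nonneg_of_sum_sq_lt {n : Type*} [Fintype n] [DecidableEq n]
    (f : n → ℝ) (T : ℝ) (hT : 0 ≤ T) (hsum : ∑ i, f i = T)
    (hsq : (∑ i, (f i)^2) * ((Fintype.card n : ℝ) - 1) < T^2) : ∀ k, 0 ≤ f k := by
  intro k
  by_contra hk
  push_neg at hk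
  set s : Finset n := Finset.univ.erase k with hs
  have hpos : 1 ≤ Fintype.card n := Fintype.card_pos_iff.mpr ⟨k⟩
  have hcard : (s.card : ℝ) = (Fintype.card n : ℝ) - 1 := by
    rw [hs, Finset.card_erase_of_mem (Finset.mem_univ k), Finset.card_univ,
      Nat.cast_sub hpos]
    simp
  have hsplit : ∑ i ∈ s, f i = T - f k := by
    have := Finset.add_sum_erase Finset.univ f (Finset.mem_univ k)
    rw [hsum] at this
    linarith [this]
  have hCS := Finset.sum_mul_sq_le_sq_mul_sq s f (fun _ => (1 : ℝ))
  simp only [mul_one, one_pow] at hCS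
  have h1 : (∑ i ∈ s, (f i)^2) * (s.card : ℝ) = (∑ i ∈ s, (f i)^2) * ∑ _i ∈ s, (1:ℝ) := by
    simp [mul_comm]
  have hCS' : (T - f k)^2 ≤ (∑ i ∈ s, (f i)^2) * ((Fintype.card n : ℝ) - 1) := by
    rw [← hcard, h1]
    calc (T - f k)^2 = (∑ i ∈ s, f i)^2 := by rw [hsplit]
      _ ≤ (∑ i ∈ s, (f i)^2) * ∑ _i ∈ s, (1:ℝ) := hCS
  have hsub : ∑ i ∈ s, (f i)^2 ≤ ∑ i, (f i)^2 :=
    Finset.sum_le_sum_of_subset_of_nonneg (Finset.subset_univ s)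
      (fun i _ _ => sq_nonneg (f i))
  have hcardpos : (0:ℝ) ≤ (Fintype.card n : ℝ) - 1 := by
    have : (1:ℝ) ≤ (Fintype.card n : ℝ) := by exact_mod_cast hpos
    linarith
  have hT2 : T^2 < (T - f k)^2 := by nlinarith
  nlinarith [mul_le_mul_of_nonneg_right hsub hcardpos]

private theorem hsNormSq_eq {d : ℕ} (a : Mat d) :
    hsNormSq a = ∑ k, ∑ l, Complex.normSq (a k l) := by
  unfold hsNormSq
  rw [Matrix.trace]
  simp only [Matrix.diag_apply, Matrix.mul_apply, Matrix.conjTranspose_apply]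
  rw [Complex.re_sum, Finset.sum_comm]
  refine Finset.sum_congr rfl fun k _ => ?_
  rw [Complex.re_sum]
  refine Finset.sum_congr rfl fun l _ => ?_
  rw [Complex.star_def, ← Complex.normSq_eq_conj_mul_self, Complex.ofReal_re]

private theorem hsNormSq_nonneg {d : ℕ} (a : Mat d) : 0 ≤ hsNormSq a := by
  rw [hsNormSq_eq]
  exact Finset.sum_nonneg fun k _ => Finset.sum_nonneg fun l _ => Complex.normSq_nonneg _

private theorem choi_isHermitian {d : ℕ} (φ : MatMap d) (hhp : IsHP φ) :
    (choiMatrix φ).IsHermitian := by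
  ext p q
  have h := hhp (Matrix.single q.1 p.1 1)
  have hstd : (Matrix.single q.1 p.1 (1:ℂ))ᴴ = Matrix.single p.1 q.1 1 := by
    ext a b; simp [Matrix.single, Matrix.conjTranspose_apply, and_comm]
  rw [hstd] at h
  have := congrArg (fun m => m p.2 q.2) h
  simp only [Matrix.conjTranspose_apply] at this
  simpa [choiMatrix, Matrix.conjTranspose_apply] using this.symm

private theorem choi_trace {d : ℕ} (φ : MatMap d) (htp : IsTP φ) :
    (choiMatrix φ).trace = (d : ℂ) := by
  have key : (choiMatrix φ).trace = ∑ i : Fin d, (φ (Matrix.single i i 1)).trace := by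
    rw [Matrix.trace, Fintype.sum_prod_type]
    refine Finset.sum_congr rfl fun i _ => ?_
    simp [choiMatrix, Matrix.trace, Matrix.diag]
  rw [key]
  have htp' : ∀ a : Mat d, (φ a).trace = a.trace := htp
  have htr : ∀ i : Fin d, (Matrix.single i i (1:ℂ)).trace = 1 := by
    intro i; simp [Matrix.trace, Matrix.diag, Matrix.single]
  simp [htp', htr]

private theorem choi_normSq_sum {d : ℕ} (φ : MatMap d) :
    ∑ i : Fin d, ∑ j : Fin d, hsNormSq (φ (Matrix.single i j 1))
      = ∑ p : Fin d × Fin d, ∑ q : Fin d × Fin d, Complex.normSq (choiMatrix φ p q) := by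
  have hh : ∀ i j : Fin d, hsNormSq (φ (Matrix.single i j 1))
      = ∑ k : Fin d, ∑ l : Fin d, Complex.normSq (choiMatrix φ (i,k) (j,l)) := by
    intro i j; rw [hsNormSq_eq]; rfl
  simp only [hh]
  rw [Fintype.sum_prod_type]
  refine Finset.sum_congr rfl fun i _ => ?_
  have hq : ∀ k : Fin d, ∑ q : Fin d × Fin d, Complex.normSq (choiMatrix φ (i,k) q)
      = ∑ j : Fin d, ∑ l : Fin d, Complex.normSq (choiMatrix φ (i,k) (j,l)) := by
    intro k; rw [Fintype.sum_prod_type]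
  simp only [hq]
  exact Finset.sum_comm

private theorem isCP_of_small {d : ℕ} (hd : 2 ≤ d) (φ : MatMap d)
    (htp : IsTP φ) (hhp : IsHP φ)
    (hsum : ∑ i : Fin d, ∑ j : Fin d, hsNormSq (φ (Matrix.single i j 1))
      < (d : ℝ) ^ 2 / ((d : ℝ) ^ 2 - 1)) : IsCP φ := by
  set C := choiMatrix φ with hC
  have hherm : C.IsHermitian := choi_isHermitian φ hhp
  have hN : (Fintype.card (Fin d × Fin d) : ℝ) = (d : ℝ)^2 := by
    simp [Fintype.card_prod, sq]
  have hd2 : (2:ℝ) ≤ (d:ℝ) := by exact_mod_cast hd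
  have hdenom : (0:ℝ) < (d : ℝ)^2 - 1 := by nlinarith
  have hsum_eig : ∑ i, hherm.eigenvalues i = (d : ℝ) := by
    have h := trace_eq_sum_eig' hherm
    rw [choi_trace φ htp] at h
    have h2 := congrArg Complex.re h
    rw [show (∑ i, ((hherm.eigenvalues i : ℂ))) = ((∑ i, hherm.eigenvalues i : ℝ) : ℂ) by
      push_cast; rfl] at h2
    simpa using h2.symm
  have hCC : C * C = Cᴴ * C := by rw [hherm.eq]
  have hre : ((Cᴴ * C).trace).re
      = ∑ p : Fin d × Fin d, ∑ q : Fin d × Fin d, Complex.normSq (C p q) := by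
    rw [Matrix.trace]
    simp only [Matrix.diag_apply, Matrix.mul_apply, Matrix.conjTranspose_apply]
    rw [Complex.re_sum, Finset.sum_comm]
    refine Finset.sum_congr rfl fun p _ => ?_
    rw [Complex.re_sum]
    refine Finset.sum_congr rfl fun q _ => ?_
    rw [Complex.star_def, ← Complex.normSq_eq_conj_mul_self, Complex.ofReal_re]
  have hsq_eig : ∑ i, (hherm.eigenvalues i)^2
      = ∑ p : Fin d × Fin d, ∑ q : Fin d × Fin d, Complex.normSq (C p q) := by
    have h := trace_sq_eq_sum_eig' hherm
    rw [hCC] at h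
    have h2 := congrArg Complex.re h
    rw [hre] at h2
    rw [show (∑ i, ((hherm.eigenvalues i : ℂ))^2)
        = ((∑ i, (hherm.eigenvalues i)^2 : ℝ) : ℂ) by push_cast; rfl] at h2
    rw [Complex.ofReal_re] at h2
    exact h2.symm
  have hsmall : (∑ i, (hherm.eigenvalues i)^2) * ((Fintype.card (Fin d × Fin d) : ℝ) - 1)
      < (d:ℝ)^2 := by
    rw [hsq_eig, hN, ← choi_normSq_sum φ]
    calc (∑ i : Fin d, ∑ j : Fin d, hsNormSq (φ (Matrix.single i j 1)))
          * ((d:ℝ)^2 - 1)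
        < ((d : ℝ) ^ 2 / ((d : ℝ) ^ 2 - 1)) * ((d:ℝ)^2 - 1) :=
          mul_lt_mul_of_pos_right hsum hdenom
      _ = (d:ℝ)^2 := by field_simp
  have heig : ∀ k, 0 ≤ hherm.eigenvalues k := by
    apply all_nonneg_of_sum_sq_lt _ ((d:ℝ)) (by positivity) hsum_eig
    calc (∑ i, (hherm.eigenvalues i)^2) * ((Fintype.card (Fin d × Fin d) : ℝ) - 1)
        < (d:ℝ)^2 := hsmall
      _ = (d:ℝ)^2 := by norm_num
  exact (Matrix.IsHermitian.posSemidef_iff_eigenvalues_nonneg hherm).mpr heig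

end AuxCP

/-- Theorem 8: if `lim_{t→∞} Σ_{i,j} ‖Λ_t(E_{ij})‖²_HS` exists and is strictly less than
`d²/(d²−1)`, then the family of trace preserving Hermiticity preserving maps `Λ_t` is
asymptotically CP. -/
theorem asymptotically_CP_of_limit_lt {d : ℕ} (Λ : ℝ → MatMap d)
    (htp : ∀ t : ℝ, 0 ≤ t → IsTP (Λ t)) (hhp : ∀ t : ℝ, 0 ≤ t → IsHP (Λ t))
    (c : ℝ)
    (hlim : Tendsto (fun t : ℝ => ∑ i : Fin d, ∑ j : Fin d,
        hsNormSq (Λ t (Matrix.single i j 1))) atTop (nhds c))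
    (hc : c < (d : ℝ) ^ 2 / ((d : ℝ) ^ 2 - 1)) :
    ∃ t₀ : ℝ, 0 < t₀ ∧ ∀ t : ℝ, t₀ ≤ t → IsCP (Λ t) ∧ IsTP (Λ t) := by
  rcases lt_or_ge d 2 with hd | hd
  · exfalso
    have hc0 : 0 ≤ c := by
      apply ge_of_tendsto hlim
      filter_upwards with t
      exact Finset.sum_nonneg fun i _ => Finset.sum_nonneg fun j _ => hsNormSq_nonneg _
    have hrhs : (d : ℝ) ^ 2 / ((d : ℝ) ^ 2 - 1) ≤ 0 := by
      interval_cases d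
      · norm_num
      · norm_num
    linarith
  · have hev : ∀ᶠ t : ℝ in atTop,
        (∑ i : Fin d, ∑ j : Fin d, hsNormSq (Λ t (Matrix.single i j 1)))
          < (d : ℝ) ^ 2 / ((d : ℝ) ^ 2 - 1) := hlim.eventually_lt_const hc
    rw [eventually_atTop] at hev
    obtain ⟨t₁, ht₁⟩ := hev
    refine ⟨max t₁ 1, lt_of_lt_of_le one_pos (le_max_right _ _), fun t ht => ?_⟩
    have ht0 : (0:ℝ) ≤ t := le_trans (le_trans zero_le_one (le_max_right t₁ 1)) ht
    have ht1 : t₁ ≤ t := le_trans (le_max_left t₁ 1) ht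
    exact ⟨isCP_of_small hd (Λ t) (htp t ht0) (hhp t ht0) (ht₁ t ht1), htp t ht0⟩
end

section
/- Let {F_i}_{i=1}^{d²} be the Hermitian Hilbert–Schmidt orthonormal basis of M_d(ℂ) with tr F_i = δ_{i,d²} and F_{d²} = I/√d, ordered so that F_i is symmetric for 1 ≤ i ≤ d(d−1)/2, antisymmetric for d(d−1)/2+1 ≤ i ≤ d(d−1), and diagonal for d(d−1)+1 ≤ i ≤ d². Let ξ_{ijk} = tr(F_i F_j F_k), θ_i = −1 for d(d−1)/2+1 ≤ i ≤ d(d−1) and θ_i = +1 otherwise, and define Ω_{μν}^{jk} = Σ_{i=1}^{d²} θ_i ξ_{ijμ} conj(ξ_{ikν}) for 1 ≤ j,k ≤ d² and 1 ≤ μ,ν ≤ d²−1. Then Ω_{μν}^{jk} = ⟨F_kᵀ F_μ, F_νᵀ F_j⟩_HS, where ⟨a,b⟩_HS = tr(a†b). -/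
open Matrix Set Filter
open scoped ComplexConjugate ComplexOrder

lemma herm_transpose_theta {d : ℕ} (F : Fin (d ^ 2) → Mat d)
    (hF : IsOrderedHermBasis d F) (i : Fin (d ^ 2)) :
    (F i)ᵀ = thetaCoef d i • F i := by
  obtain ⟨h1, h2, h3, h4, h5, h6, h7⟩ := hF
  unfold thetaCoef
  split_ifs with h
  · rw [h6 i h.1 h.2]; simp
  · by_cases hi : (i : ℕ) < d * (d - 1) / 2
    · rw [h5 i hi]; simp
    · push_neg at h hi
      have hge : d * (d - 1) ≤ (i : ℕ) := h hi
      ext a b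
      rw [Matrix.transpose_apply, one_smul]
      by_cases hab : a = b
      · subst hab; rfl
      · rw [h7 i hge a b hab, h7 i hge b a (Ne.symm hab)]

lemma sum_trace_smul {d : ℕ} (hd : 0 < d) (F : Fin (d ^ 2) → Mat d)
    (hF : IsOrderedHermBasis d F) (A : Mat d) :
    ∑ i, ((F i * A).trace) • F i = A := by
  obtain ⟨h1, h2, h3, h4, h5, h6, h7⟩ := hF
  have hli : LinearIndependent ℂ F := by
    rw [linearIndependent_iff']
    intro s g hg i hi
    have h0 := congrArg (fun M => (F i * M).trace) hg
    simp only [Matrix.mul_sum, Matrix.trace_sum, Matrix.mul_smul,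
      Matrix.trace_smul, Matrix.mul_zero, Matrix.trace_zero, smul_eq_mul] at h0
    rw [Finset.sum_eq_single i (fun j _ hji => by rw [h2 i j, if_neg (Ne.symm hji), mul_zero])
      (fun hns => absurd hi hns)] at h0
    rwa [h2 i i, if_pos rfl, mul_one] at h0
  have : Nonempty (Fin (d ^ 2)) := ⟨⟨0, by positivity⟩⟩
  have hcard : Fintype.card (Fin (d ^ 2)) = Module.finrank ℂ (Mat d) := by
    simp [Module.finrank_matrix]; ring
  let B := basisOfLinearIndependentOfCardEqFinrank hli hcard
  have hB : ∀ i, B i = F i := fun i =>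
    congrFun (coe_basisOfLinearIndependentOfCardEqFinrank hli hcard) i
  let T : Mat d →ₗ[ℂ] Mat d :=
    { toFun := fun A => ∑ i, ((F i * A).trace) • F i
      map_add' := by
        intro x y
        simp [Matrix.mul_add, Matrix.trace_add, add_smul, Finset.sum_add_distrib]
      map_smul' := by
        intro c x
        simp [Matrix.mul_smul, Matrix.trace_smul, smul_smul, Finset.smul_sum] }
  have hT : T = LinearMap.id := by
    apply B.ext
    intro jj
    rw [hB jj]
    show ∑ i, ((F i * F jj).trace) • F i = F jj
    rw [Finset.sum_eq_single jj (fun i _ hij => by rw [h2 i jj, if_neg hij, zero_smul])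
      (fun hns => absurd (Finset.mem_univ jj) hns)]
    rw [h2 jj jj, if_pos rfl, one_smul]
  exact LinearMap.congr_fun hT A

/-- Lemma 20: the geometric tensor satisfies `Ω_{μν}^{jk} = ⟨F_kᵀ F_μ, F_νᵀ F_j⟩_HS`. -/
theorem omega_eq_hsInner {d : ℕ} (F : Fin (d ^ 2) → Mat d) (hF : IsOrderedHermBasis d F)
    (μ ν : Fin (d ^ 2)) (hμ : (μ : ℕ) + 1 < d ^ 2) (hν : (ν : ℕ) + 1 < d ^ 2)
    (j k : Fin (d ^ 2)) :
    Omega F μ ν j k = (((F k)ᵀ * F μ)ᴴ * ((F ν)ᵀ * F j)).trace := by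
  rcases Nat.eq_zero_or_pos d with hd | hd
  · subst hd; simp at hμ
  have h1 := hF.1
  have h2t := herm_transpose_theta F hF
  have key : Omega F μ ν j k = ((F ν * F k)ᵀ * (F j * F μ)).trace := by
    unfold Omega xiCoef
    have step : ∀ i, thetaCoef d i * (F i * F j * F μ).trace *
        (starRingEnd ℂ) ((F i * F k * F ν).trace)
        = (((((F i * (F ν * F k)).trace) • F i)ᵀ) * (F j * F μ)).trace := by
      intro i
      have hconj : (starRingEnd ℂ) ((F i * F k * F ν).trace)
          = (F i * (F ν * F k)).trace := by
        rw [starRingEnd_apply, ← Matrix.trace_conjTranspose,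
          Matrix.conjTranspose_mul, Matrix.conjTranspose_mul, h1 i, h1 k, h1 ν,
          ← mul_assoc, Matrix.trace_mul_cycle, ← mul_assoc]
      rw [hconj, Matrix.transpose_smul, Matrix.smul_mul, Matrix.trace_smul, smul_eq_mul,
        h2t i, Matrix.smul_mul, Matrix.trace_smul, smul_eq_mul, mul_assoc (F i)]
      ring
    rw [Finset.sum_congr rfl fun i _ => step i]
    have : ∑ i, (((((F i * (F ν * F k)).trace) • F i)ᵀ) * (F j * F μ)).trace
        = (((∑ i, ((F i * (F ν * F k)).trace) • F i)ᵀ) * (F j * F μ)).trace := by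
      rw [Matrix.transpose_sum, Matrix.sum_mul, Matrix.trace_sum]
    rw [this, sum_trace_smul hd F hF (F ν * F k)]
  rw [key]
  have hkh : ((F k)ᵀ)ᴴ = (F k)ᵀ := by
    show ((F k)ᴴ)ᵀ = (F k)ᵀ
    rw [h1 k]
  rw [Matrix.conjTranspose_mul, h1 μ, hkh, Matrix.transpose_mul]
  rw [Matrix.trace_mul_comm (F μ * (F k)ᵀ)]
  simp only [mul_assoc]
  rw [Matrix.trace_mul_comm]
  simp only [mul_assoc]
end

section
/- Let θ̂ = diag(θ₁, …, θ_{d²}) ∈ M_{d²}(ℂ) where θ_i = −1 for d(d−1)/2+1 ≤ i ≤ d(d−1) and θ_i = +1 otherwise. For every Hilbert–Schmidt orthonormal basis {G_i}_{i=1}^{d²} of M_d(ℂ) (not necessarily Hermitian) there exists a Hermitian matrix [m_{ij}] ∈ M_{d²}(ℂ), unitarily equivalent to θ̂, such that Σ_{i,j=1}^{d²} m_{ij} G_i a G_j† = aᵀ for all a ∈ M_d(ℂ). -/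
open Matrix Set Filter
open scoped ComplexConjugate ComplexOrder

noncomputable section
namespace TrAux
open Matrix
open scoped ComplexConjugate

variable {d : ℕ}

def rr : ℂ := ((Real.sqrt 2 : ℝ) : ℂ)⁻¹

lemma rr_mul_rr : rr * rr = 2⁻¹ := by
  rw [rr, ← mul_inv, ← Complex.ofReal_mul, Real.mul_self_sqrt (by norm_num)]
  norm_num

lemma rr_sq : rr ^ 2 = 2⁻¹ := by rw [sq]; exact rr_mul_rr

lemma conj_rr : (starRingEnd ℂ) rr = rr := by
  rw [rr, map_inv₀, Complex.conj_ofReal]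

def c1 (j k : Fin d) : ℂ := if j = k then 1 else if j < k then rr else Complex.I * rr
def c2 (j k : Fin d) : ℂ := if j = k then 0 else if j < k then rr else -(Complex.I * rr)

def F0 (p : Fin d × Fin d) : Mat d :=
  c1 p.1 p.2 • Matrix.single p.1 p.2 1 + c2 p.1 p.2 • Matrix.single p.2 p.1 1

def eps (p : Fin d × Fin d) : ℂ := if p.2 < p.1 then -1 else 1

lemma F0_apply (p : Fin d × Fin d) (u v : Fin d) :
    F0 p u v = (if p.1 = u ∧ p.2 = v then c1 p.1 p.2 else 0)
      + (if p.2 = u ∧ p.1 = v then c2 p.1 p.2 else 0) := by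
  simp [F0, Matrix.single, mul_ite, mul_one, mul_zero]

lemma E_conjT (j k : Fin d) : (Matrix.single j k (1:ℂ))ᴴ = Matrix.single k j 1 := by
  ext u v
  simp [Matrix.single, conjTranspose_apply, and_comm]

lemma F0_herm (p : Fin d × Fin d) : (F0 p).IsHermitian := by
  obtain ⟨j, k⟩ := p
  show _ᴴ = _
  rw [F0, conjTranspose_add, conjTranspose_smul, conjTranspose_smul, E_conjT, E_conjT]
  rcases lt_trichotomy j k with h | h | h
  · simp only [c1, c2, if_neg h.ne, if_pos h, starRingEnd_apply]
    rw [show (star rr) = rr from conj_rr]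
    exact add_comm _ _
  · subst h
    simp [c1, c2]
  · simp only [c1, c2, if_neg h.ne', if_neg (lt_asymm h), starRingEnd_apply]
    rw [show star (Complex.I * rr) = -(Complex.I * rr) by
      rw [star_mul', show star rr = rr from conj_rr, Complex.star_def, Complex.conj_I]; ring]
    rw [show star (-(Complex.I * rr)) = Complex.I * rr by
      rw [star_neg, star_mul', show star rr = rr from conj_rr, Complex.star_def, Complex.conj_I]; ring]
    exact add_comm _ _


lemma trace_E (a e : Fin d) : (Matrix.single a e (1:ℂ)).trace = if e = a then 1 else 0 := by
  by_cases h : e = a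
  · subst h; simp [Matrix.trace, Matrix.diag, Matrix.single, and_self]
  · simp only [Matrix.trace, Matrix.diag, Matrix.single, of_apply, if_neg h]
    rw [Finset.sum_eq_zero]
    intro i _
    by_cases h1 : a = i <;> by_cases h2 : e = i <;> simp_all

lemma trace_E_mul_E (a b c e : Fin d) :
    (Matrix.single a b (1:ℂ) * Matrix.single c e 1).trace = if b = c ∧ e = a then 1 else 0 := by
  by_cases h : b = c
  · subst h
    rw [Matrix.single_mul_single_same, one_mul, trace_E]
    simp
  · rw [Matrix.single_mul_single_of_ne (h := h), trace_zero]
    simp [h]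

lemma F0_orth (p q : Fin d × Fin d) :
    (F0 p * F0 q).trace = if p = q then 1 else 0 := by
  obtain ⟨j, k⟩ := p; obtain ⟨l, m⟩ := q
  rw [F0, F0]
  simp only [add_mul, mul_add, smul_mul_assoc, mul_smul_comm, trace_add, trace_smul,
    smul_eq_mul, trace_E_mul_E, smul_smul]
  have hI := Complex.I_mul_I
  have h2 := rr_mul_rr
  by_cases hjl : j = l <;> by_cases hkm : k = m <;> by_cases hjm : j = m <;>
    by_cases hkl : k = l <;> rcases lt_trichotomy j k with h | h | h <;>
    simp_all [c1, c2, Prod.ext_iff, lt_asymm, lt_irrefl, h, mul_ite] <;>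
    first
      | tauto
      | (intros; simp_all)
      | (ring_nf; try simp_all [rr_sq, Complex.I_sq]; try norm_num; try ring_nf)

lemma Kident (r s u v : Fin d) :
    ∑ p : Fin d × Fin d, eps p * F0 p r s * F0 p u v
      = if r = u ∧ s = v then 1 else 0 := by
  have hI := Complex.I_mul_I
  have h2 := rr_mul_rr
  rw [← Finset.sum_subset (Finset.subset_univ ({(r,s),(s,r)} : Finset (Fin d × Fin d)))]
  swap
  · intro p _ hp
    simp only [Finset.mem_insert, Finset.mem_singleton] at hp
    push_neg at hp
    have h1 : F0 p r s = 0 := by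
      rw [F0_apply, if_neg, if_neg]
      · norm_num
      · rintro ⟨ha, hb⟩
        exact hp.2 (by obtain ⟨p1, p2⟩ := p; simp_all [Prod.ext_iff])
      · rintro ⟨ha, hb⟩
        exact hp.1 (by obtain ⟨p1, p2⟩ := p; simp_all [Prod.ext_iff])
    rw [h1]; ring
  by_cases hrs : r = s
  · subst hrs
    rw [show ({(r,r),(r,r)} : Finset (Fin d × Fin d)) = {(r,r)} by simp]
    rw [Finset.sum_singleton, F0_apply, F0_apply]
    simp [eps, c1, c2]
    try (split_ifs <;> simp_all)
  · rw [Finset.sum_pair (by simp [Prod.ext_iff]; tauto)]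
    rw [F0_apply, F0_apply, F0_apply, F0_apply]
    simp only [eps]
    by_cases hru : r = u <;> by_cases hsv : s = v <;> by_cases hrv : r = v <;>
      by_cases hsu : s = u <;> rcases lt_trichotomy r s with h | h | h <;>
      simp_all [c1, c2, lt_asymm, lt_irrefl, mul_ite] <;>
      first
        | tauto
        | (intros; simp_all)
        | (ring_nf; try simp_all [rr_sq, Complex.I_sq]; try norm_num; try ring_nf)

lemma M0 (a : Mat d) : ∑ p : Fin d × Fin d, eps p • (F0 p * a * F0 p) = aᵀ := by
  ext r w
  have step : ∀ p : Fin d × Fin d,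
      (eps p • (F0 p * a * F0 p)) r w = ∑ u, ∑ s, a s u * (eps p * F0 p r s * F0 p u w) := by
    intro p
    simp only [Matrix.smul_apply, Matrix.mul_apply, smul_eq_mul, Finset.sum_mul, Finset.mul_sum]
    refine Finset.sum_congr rfl fun u _ => Finset.sum_congr rfl fun s _ => by ring
  calc (∑ p : Fin d × Fin d, eps p • (F0 p * a * F0 p)) r w
      = ∑ p : Fin d × Fin d, ∑ u, ∑ s, a s u * (eps p * F0 p r s * F0 p u w) := by
        rw [Matrix.sum_apply]
        exact Finset.sum_congr rfl fun p _ => step p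
    _ = ∑ u, ∑ s, a s u * ∑ p : Fin d × Fin d, eps p * F0 p r s * F0 p u w := by
        rw [Finset.sum_comm]
        refine Finset.sum_congr rfl fun u _ => ?_
        rw [Finset.sum_comm]
        exact Finset.sum_congr rfl fun s _ => (Finset.mul_sum _ _ _).symm
    _ = ∑ u, ∑ s, a s u * if r = u ∧ s = w then 1 else 0 := by
        exact Finset.sum_congr rfl fun u _ => Finset.sum_congr rfl fun s _ => by rw [Kident]
    _ = a w r := by
        simp [mul_ite, ite_and, Finset.sum_ite_eq, Finset.sum_ite_eq']
    _ = aᵀ r w := by rw [Matrix.transpose_apply]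

lemma card_Ico_fin (n a b : ℕ) (hab : a ≤ b) (hbn : b ≤ n) :
    Fintype.card {i : Fin n // a ≤ (i : ℕ) ∧ (i : ℕ) < b} = b - a := by
  have e : {i : Fin n // a ≤ (i : ℕ) ∧ (i : ℕ) < b} ≃ Fin (b - a) :=
    { toFun := fun x => ⟨(x.1 : ℕ) - a, by obtain ⟨h1, h2⟩ := x.2; omega⟩
      invFun := fun y => ⟨⟨a + (y : ℕ), by have := y.2; omega⟩, by
        constructor
        · simp
        · have := y.2; simpa using by omega⟩
      left_inv := fun x => by
        apply Subtype.ext; apply Fin.ext; obtain ⟨h1, h2⟩ := x.2; simp; omega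
      right_inv := fun y => by apply Fin.ext; simp }
  rw [Fintype.card_congr e, Fintype.card_fin]

lemma card_lt_pairs (n : ℕ) :
    Fintype.card {p : Fin n × Fin n // p.2 < p.1} = n * (n - 1) / 2 := by
  have e : {p : Fin n × Fin n // p.2 < p.1} ≃ Σ j : Fin n, Fin (j : ℕ) :=
    { toFun := fun x => ⟨x.1.1, ⟨(x.1.2 : ℕ), x.2⟩⟩
      invFun := fun s => ⟨(s.1, ⟨(s.2 : ℕ), lt_trans s.2.2 s.1.2⟩), s.2.2⟩
      left_inv := fun x => rfl
      right_inv := fun s => rfl }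
  rw [Fintype.card_congr e, Fintype.card_sigma]
  simp only [Fintype.card_fin]
  rw [Fin.sum_univ_eq_sum_range (fun i => i) n]
  exact Finset.sum_range_id n

lemma complete_of_orth_span {d : ℕ} (G : Fin (d ^ 2) → Mat d)
    (horth : ∀ i j, ((G i)ᴴ * G j).trace = if i = j then 1 else 0)
    (hspan : Submodule.span ℂ (Set.range G) = ⊤) (X : Mat d) :
    ∑ i, ((G i)ᴴ * X).trace • G i = X := by
  let T : Mat d →ₗ[ℂ] Mat d :=
    { toFun := fun X => ∑ i, ((G i)ᴴ * X).trace • G i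
      map_add' := by
        intro x y
        simp [Matrix.mul_add, Matrix.trace_add, add_smul, Finset.sum_add_distrib]
      map_smul' := by
        intro c x
        simp [Matrix.mul_smul, Matrix.trace_smul, smul_smul, Finset.smul_sum] }
  have hT : T = LinearMap.id := by
    apply LinearMap.ext_on hspan
    rintro x ⟨j, rfl⟩
    show ∑ i, ((G i)ᴴ * G j).trace • G i = G j
    simp only [horth]
    simp [ite_smul]
  exact DFunLike.congr_fun hT X

end TrAux

end

/-- For every Hilbert–Schmidt orthonormal basis `{G_i}` of `M_d(ℂ)` there is a Hermitian
matrix `[m_{ij}]`, unitarily equivalent to `θ̂ = diag(θ_i)`, such that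
`Σ_{i,j} m_{ij} G_i a G_j† = aᵀ` for all `a`. -/
theorem transpose_operator_sum_general_basis {d : ℕ} (G : Fin (d ^ 2) → Mat d)
    (horth : ∀ i j, ((G i)ᴴ * G j).trace = if i = j then 1 else 0)
    (hspan : Submodule.span ℂ (Set.range G) = ⊤) :
    ∃ m : Matrix (Fin (d ^ 2)) (Fin (d ^ 2)) ℂ, m.IsHermitian ∧
      (∃ U ∈ Matrix.unitaryGroup (Fin (d ^ 2)) ℂ,
        m = Uᴴ * Matrix.diagonal (thetaCoef d) * U) ∧
      ∀ a : Mat d, ∑ i : Fin (d ^ 2), ∑ j : Fin (d ^ 2), m i j • (G i * a * (G j)ᴴ) = aᵀ := by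
  classical
  have hd2 : d ^ 2 = d * d := sq d
  have heven : Even (d * (d - 1)) := by
    cases d with
    | zero => simp
    | succ m => simpa [Nat.succ_sub_one, mul_comm] using Nat.even_mul_succ_self m
  have h2N : d * (d - 1) / 2 + d * (d - 1) / 2 = d * (d - 1) := by
    obtain ⟨c, hc⟩ := heven; omega
  have hle : d * (d - 1) ≤ d ^ 2 := by
    rw [hd2]; exact Nat.mul_le_mul_left d (Nat.sub_le d 1)
  have hcard1 : Fintype.card {i : Fin (d ^ 2) // d * (d - 1) / 2 ≤ (i : ℕ) ∧ (i : ℕ) < d * (d - 1)}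
      = Fintype.card {p : Fin d × Fin d // p.2 < p.1} := by
    rw [TrAux.card_Ico_fin (d ^ 2) (d * (d - 1) / 2) (d * (d - 1)) (by omega) hle,
      TrAux.card_lt_pairs]
    omega
  have hcard2 : Fintype.card {i : Fin (d ^ 2) // ¬ (d * (d - 1) / 2 ≤ (i : ℕ) ∧ (i : ℕ) < d * (d - 1))}
      = Fintype.card {p : Fin d × Fin d // ¬ p.2 < p.1} := by
    rw [Fintype.card_subtype_compl, Fintype.card_subtype_compl, hcard1, Fintype.card_fin,
      Fintype.card_prod, Fintype.card_fin, hd2]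
  let e₁ := Fintype.equivOfCardEq hcard1
  let e₂ := Fintype.equivOfCardEq hcard2
  let π : Fin (d ^ 2) ≃ Fin d × Fin d :=
    (Equiv.sumCompl (fun i : Fin (d ^ 2) => d * (d - 1) / 2 ≤ (i : ℕ) ∧ (i : ℕ) < d * (d - 1))).symm.trans
      ((e₁.sumCongr e₂).trans (Equiv.sumCompl (fun p : Fin d × Fin d => p.2 < p.1)))
  have hθ : ∀ k, thetaCoef d k = TrAux.eps (π k) := by
    intro k
    by_cases h : d * (d - 1) / 2 ≤ (k : ℕ) ∧ (k : ℕ) < d * (d - 1)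
    · have hπ : π k = (e₁ ⟨k, h⟩).1 := by
        show (Equiv.sumCompl _) ((e₁.sumCongr e₂) ((Equiv.sumCompl _).symm k)) = _
        rw [Equiv.sumCompl_symm_apply_of_pos (p := fun i : Fin (d ^ 2) => d * (d - 1) / 2 ≤ (i : ℕ) ∧ (i : ℕ) < d * (d - 1)) h]
        rfl
      rw [thetaCoef, if_pos h, hπ, TrAux.eps, if_pos (e₁ ⟨k, h⟩).2]
    · have hπ : π k = (e₂ ⟨k, h⟩).1 := by
        show (Equiv.sumCompl _) ((e₁.sumCongr e₂) ((Equiv.sumCompl _).symm k)) = _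
        rw [Equiv.sumCompl_symm_apply_of_neg (p := fun i : Fin (d ^ 2) => d * (d - 1) / 2 ≤ (i : ℕ) ∧ (i : ℕ) < d * (d - 1)) h]
        rfl
      rw [thetaCoef, if_neg h, hπ, TrAux.eps, if_neg (e₂ ⟨k, h⟩).2]
  set F : Fin (d ^ 2) → Mat d := fun k => TrAux.F0 (π k) with hF
  have hFH : ∀ k, (F k)ᴴ = F k := fun k => TrAux.F0_herm (π k)
  have hFo : ∀ k l, (F k * F l).trace = if k = l then 1 else 0 := by
    intro k l
    rw [hF]
    rw [TrAux.F0_orth]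
    simp only [EmbeddingLike.apply_eq_iff_eq]
  have hM : ∀ a : Mat d, ∑ k, thetaCoef d k • (F k * a * F k) = aᵀ := by
    intro a
    rw [← TrAux.M0 a]
    exact Fintype.sum_equiv π _ _ (fun k => by rw [hθ k])
  set W : Matrix (Fin (d ^ 2)) (Fin (d ^ 2)) ℂ := Matrix.of fun i k => (F k * G i).trace with hW
  have hWa : ∀ i k, W i k = (F k * G i).trace := fun i k => rfl
  have hGc := TrAux.complete_of_orth_span G horth hspan
  have hFexp : ∀ k, ∑ i, (starRingEnd ℂ) (W i k) • G i = F k := by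
    intro k
    have hcoef : ∀ i, (starRingEnd ℂ) (W i k) = ((G i)ᴴ * F k).trace := by
      intro i
      rw [hWa i k, starRingEnd_apply, ← Matrix.trace_conjTranspose, Matrix.conjTranspose_mul, hFH]
    rw [Finset.sum_congr rfl fun i _ => by rw [hcoef]]
    exact hGc (F k)
  have hFexpH : ∀ k, ∑ j, (W j k) • (G j)ᴴ = F k := by
    intro k
    have h := congrArg Matrix.conjTranspose (hFexp k)
    rw [Matrix.conjTranspose_sum, hFH] at h
    rw [← h]
    refine Finset.sum_congr rfl fun j _ => ?_
    rw [Matrix.conjTranspose_smul, starRingEnd_apply, star_star]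
  have hUnit : Wᵀ ∈ Matrix.unitaryGroup (Fin (d ^ 2)) ℂ := by
    rw [Matrix.mem_unitaryGroup_iff]
    ext k l
    have h1 : (Wᵀ * star Wᵀ) k l = ∑ i, (starRingEnd ℂ) (W i l) * W i k := by
      rw [Matrix.mul_apply]
      refine Finset.sum_congr rfl fun i _ => ?_
      rw [Matrix.star_apply, Matrix.transpose_apply, Matrix.transpose_apply, starRingEnd_apply]
      exact mul_comm _ _
    have h2 : (F k * (∑ i, (starRingEnd ℂ) (W i l) • G i)).trace
        = ∑ i, (starRingEnd ℂ) (W i l) * (F k * G i).trace := by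
      rw [Matrix.mul_sum, Matrix.trace_sum]
      refine Finset.sum_congr rfl fun i _ => ?_
      rw [Matrix.mul_smul, Matrix.trace_smul, smul_eq_mul]
    have h3 : (∑ i, (starRingEnd ℂ) (W i l) * W i k)
        = ∑ i, (starRingEnd ℂ) (W i l) * (F k * G i).trace :=
      Finset.sum_congr rfl fun i _ => by rw [hWa i k]
    rw [h1, h3, ← h2, hFexp l, hFo, Matrix.one_apply]
  refine ⟨(Wᵀ)ᴴ * Matrix.diagonal (thetaCoef d) * Wᵀ, ?_, ⟨Wᵀ, hUnit, rfl⟩, ?_⟩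
  · have hD : (Matrix.diagonal (thetaCoef d))ᴴ = Matrix.diagonal (thetaCoef d) := by
      have hs : star (thetaCoef d) = thetaCoef d := by
        funext i
        rw [Pi.star_apply, thetaCoef]
        split_ifs <;> simp
      rw [Matrix.diagonal_conjTranspose, hs]
    show _ᴴ = _
    rw [Matrix.conjTranspose_mul, Matrix.conjTranspose_mul, Matrix.conjTranspose_conjTranspose,
      hD, Matrix.mul_assoc]
  · intro a
    have hm : ∀ i j, ((Wᵀ)ᴴ * Matrix.diagonal (thetaCoef d) * Wᵀ) i j
        = ∑ k, thetaCoef d k * ((starRingEnd ℂ) (W i k) * W j k) := by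
      intro i j
      rw [Matrix.mul_apply]
      refine Finset.sum_congr rfl fun k _ => ?_
      rw [Matrix.mul_diagonal, Matrix.conjTranspose_apply, Matrix.transpose_apply,
        Matrix.transpose_apply, starRingEnd_apply]
      ring
    have expand : ∀ k, thetaCoef d k •
        ((∑ i, (starRingEnd ℂ) (W i k) • G i) * a * (∑ j, W j k • (G j)ᴴ))
        = ∑ i, ∑ j, (thetaCoef d k * ((starRingEnd ℂ) (W i k) * W j k)) • (G i * a * (G j)ᴴ) := by
      intro k
      rw [Matrix.sum_mul, Matrix.sum_mul, Finset.smul_sum]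
      refine Finset.sum_congr rfl fun i _ => ?_
      rw [Matrix.mul_sum, Finset.smul_sum]
      refine Finset.sum_congr rfl fun j _ => ?_
      rw [smul_mul_assoc, smul_mul_assoc, mul_smul_comm, smul_smul, smul_smul]
      ring_nf
    calc ∑ i, ∑ j, ((Wᵀ)ᴴ * Matrix.diagonal (thetaCoef d) * Wᵀ) i j • (G i * a * (G j)ᴴ)
        = ∑ i, ∑ j, ∑ k, (thetaCoef d k * ((starRingEnd ℂ) (W i k) * W j k)) • (G i * a * (G j)ᴴ) := by
          simp only [hm, Finset.sum_smul]
      _ = ∑ i, ∑ k, ∑ j, (thetaCoef d k * ((starRingEnd ℂ) (W i k) * W j k)) • (G i * a * (G j)ᴴ) := by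
          exact Finset.sum_congr rfl fun i _ => Finset.sum_comm
      _ = ∑ k, ∑ i, ∑ j, (thetaCoef d k * ((starRingEnd ℂ) (W i k) * W j k)) • (G i * a * (G j)ᴴ) := by
          exact Finset.sum_comm
      _ = ∑ k, thetaCoef d k • ((∑ i, (starRingEnd ℂ) (W i k) • G i) * a * (∑ j, W j k • (G j)ᴴ)) :=
          Finset.sum_congr rfl fun k _ => (expand k).symm
      _ = ∑ k, thetaCoef d k • (F k * a * F k) := by
          refine Finset.sum_congr rfl fun k _ => ?_
          rw [hFexp k, hFexpH k]
      _ = aᵀ := hM a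
end

section
/- Let θ̂ = diag(θ₁, …, θ_{d²}) ∈ M_{d²}(ℂ) where θ_i = −1 for d(d−1)/2+1 ≤ i ≤ d(d−1) and θ_i = +1 otherwise. For every matrix [m_{ij}] ∈ M_{d²}(ℂ) that is unitarily equivalent to θ̂ there exists a Hilbert–Schmidt orthonormal basis {G_i}_{i=1}^{d²} of M_d(ℂ) (not necessarily Hermitian) such that Σ_{i,j=1}^{d²} m_{ij} G_i a G_j† = aᵀ for all a ∈ M_d(ℂ). -/
open Matrix Set Filter
open scoped ComplexConjugate ComplexOrder

section AuxUE

variable {n : Type*} [Fintype n] [DecidableEq n]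

/-- Spectral decomposition of a Hermitian involution: eigenvalues are `±1`. -/
lemma herm_invol_diag {A : Matrix n n ℂ} (hA : A.IsHermitian) (h2 : A * A = 1) :
    ∃ ev : n → ℂ, (∀ i, ev i = 1 ∨ ev i = -1) ∧
      ∃ V ∈ Matrix.unitaryGroup n ℂ, A = Vᴴ * Matrix.diagonal ev * V := by
  classical
  set W : Matrix n n ℂ := (hA.eigenvectorUnitary : Matrix n n ℂ) with hWdef
  have hWmem : W ∈ Matrix.unitaryGroup n ℂ := hA.eigenvectorUnitary.2
  have hWW' : W * Wᴴ = 1 := (Matrix.mem_unitaryGroup_iff).mp hWmem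
  have hW'W : Wᴴ * W = 1 := (Matrix.mem_unitaryGroup_iff').mp hWmem
  set ev : n → ℂ := RCLike.ofReal ∘ hA.eigenvalues with hev
  set D := Matrix.diagonal ev with hDdef
  have hspec : A = W * D * Wᴴ := hA.spectral_theorem
  have hDone : Wᴴ * A * W = D := by
    rw [hspec, ← Matrix.mul_assoc Wᴴ (W * D) Wᴴ, ← Matrix.mul_assoc Wᴴ W D, hW'W, one_mul,
      Matrix.mul_assoc, hW'W, mul_one]
  have hD2 : D * D = 1 := by
    calc D * D = Wᴴ * A * W * (Wᴴ * A * W) := by rw [hDone]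
      _ = Wᴴ * (A * (W * Wᴴ) * A) * W := by simp only [Matrix.mul_assoc]
      _ = Wᴴ * (A * A) * W := by rw [hWW', Matrix.mul_one]
      _ = Wᴴ * W := by rw [h2, Matrix.mul_one]
      _ = 1 := hW'W
  refine ⟨ev, ?_, Wᴴ, Unitary.star_mem hWmem, ?_⟩
  · intro i
    have h1 : (D * D) i i = (1 : Matrix n n ℂ) i i := by rw [hD2]
    rw [hDdef, Matrix.diagonal_mul_diagonal, Matrix.diagonal_apply_eq, Matrix.one_apply_eq] at h1
    have : (ev i - 1) * (ev i + 1) = 0 := by linear_combination h1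
    rcases mul_eq_zero.mp this with h | h
    · left; linear_combination h
    · right; linear_combination h
  · rw [Matrix.conjTranspose_conjTranspose]; exact hspec

/-- Matching permutation for two `±1`-valued functions with equal sums. -/
lemma exists_perm_of_sum_eq {ev₁ ev₂ : n → ℂ}
    (h₁ : ∀ i, ev₁ i = 1 ∨ ev₁ i = -1) (h₂ : ∀ i, ev₂ i = 1 ∨ ev₂ i = -1)
    (hsum : ∑ i, ev₁ i = ∑ i, ev₂ i) :
    ∃ σ : Equiv.Perm n, ∀ i, ev₁ i = ev₂ (σ i) := by
  have key : ∀ ev : n → ℂ, (∀ i, ev i = 1 ∨ ev i = -1) →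
      ∑ i, ev i = ((Finset.univ.filter fun i => ev i = 1).card : ℂ)
        - ((Finset.univ.filter fun i => ¬ ev i = 1).card : ℂ) := by
    intro ev h
    rw [← Finset.sum_filter_add_sum_filter_not Finset.univ (fun i => ev i = 1)]
    rw [Finset.sum_congr rfl (fun i hi => (Finset.mem_filter.mp hi).2),
      Finset.sum_congr rfl (fun i hi => ((h i).resolve_left (Finset.mem_filter.mp hi).2)),
      Finset.sum_const, Finset.sum_const]
    simp [sub_eq_add_neg]
  have hc₁ := key ev₁ h₁
  have hc₂ := key ev₂ h₂
  have hcomp₁ := Finset.card_filter_add_card_filter_not (s := Finset.univ)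
    (p := fun i => ev₁ i = 1)
  have hcomp₂ := Finset.card_filter_add_card_filter_not (s := Finset.univ)
    (p := fun i => ev₂ i = 1)
  have hcard : (Finset.univ.filter fun i => ev₁ i = 1).card
      = (Finset.univ.filter fun i => ev₂ i = 1).card := by
    have : ((Finset.univ.filter fun i => ev₁ i = 1).card : ℂ)
        = ((Finset.univ.filter fun i => ev₂ i = 1).card : ℂ) := by
      have e1 : ((Finset.univ.filter fun i => ev₁ i = 1).card : ℂ)
          + ((Finset.univ.filter fun i => ¬ ev₁ i = 1).card : ℂ) = (((Finset.univ : Finset n).card : ℕ) : ℂ) := by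
        exact_mod_cast congrArg (Nat.cast (R := ℂ)) hcomp₁
      have e2 : ((Finset.univ.filter fun i => ev₂ i = 1).card : ℂ)
          + ((Finset.univ.filter fun i => ¬ ev₂ i = 1).card : ℂ) = (((Finset.univ : Finset n).card : ℕ) : ℂ) := by
        exact_mod_cast congrArg (Nat.cast (R := ℂ)) hcomp₂
      have := hsum
      rw [hc₁, hc₂] at this
      linear_combination (this + e1 - e2) / 2
    exact_mod_cast this
  have hcard' : (Finset.univ.filter fun i => ¬ ev₁ i = 1).card
      = (Finset.univ.filter fun i => ¬ ev₂ i = 1).card := by omega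
  have hsub₁ : Fintype.card {i // ev₁ i = 1} = Fintype.card {i // ev₂ i = 1} := by
    simpa [Fintype.card_subtype] using hcard
  have hsub₂ : Fintype.card {i // ¬ ev₁ i = 1} = Fintype.card {i // ¬ ev₂ i = 1} := by
    simpa [Fintype.card_subtype] using hcard'
  obtain ⟨eP⟩ := Fintype.card_eq.mp hsub₁
  obtain ⟨eN⟩ := Fintype.card_eq.mp hsub₂
  refine ⟨(Equiv.sumCompl (fun i => ev₁ i = 1)).symm.trans
    ((eP.sumCongr eN).trans (Equiv.sumCompl (fun i => ev₂ i = 1))), fun i => ?_⟩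
  by_cases h : ev₁ i = 1
  · have e1 : (Equiv.sumCompl fun j => ev₁ j = 1).symm i = Sum.inl ⟨i, h⟩ :=
      Equiv.sumCompl_symm_apply_of_pos (p := fun j => ev₁ j = 1) (a := i) h
    rw [Equiv.trans_apply, Equiv.trans_apply, e1]
    simp only [Equiv.sumCongr_apply, Sum.map_inl, Equiv.sumCompl_apply_inl]
    rw [h]; exact ((eP ⟨i, h⟩).2).symm
  · have e1 : (Equiv.sumCompl fun j => ev₁ j = 1).symm i = Sum.inr ⟨i, h⟩ :=
      Equiv.sumCompl_symm_apply_of_neg (p := fun j => ev₁ j = 1) (a := i) h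
    rw [Equiv.trans_apply, Equiv.trans_apply, e1]
    simp only [Equiv.sumCongr_apply, Sum.map_inr, Equiv.sumCompl_apply_inr]
    rw [(h₁ i).resolve_left h]
    exact ((h₂ _).resolve_left (eN ⟨i, h⟩).2).symm

/-- Conjugating a diagonal matrix by a permutation matrix permutes the diagonal. -/
lemma perm_conj (ev : n → ℂ) (τ : Equiv.Perm n) :
    ∃ P ∈ Matrix.unitaryGroup n ℂ,
      Matrix.diagonal (fun i => ev (τ i)) = Pᴴ * Matrix.diagonal ev * P := by
  set Q : Matrix n n ℂ := Matrix.of fun i j => if j = τ i then 1 else 0 with hQ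
  have hQ'Q : Qᴴ * Q = 1 := by
    ext i j
    simp only [Matrix.mul_apply, Matrix.conjTranspose_apply, hQ, Matrix.of_apply,
      apply_ite (starRingEnd ℂ), _root_.map_one, _root_.map_zero, ite_mul, one_mul, zero_mul,
      mul_ite, mul_one, mul_zero]
    rw [Finset.sum_eq_single (τ.symm j)]
    · simp [Matrix.one_apply, eq_comm]
    · intro b _ hb
      rw [if_neg]
      intro hib
      exact hb ((Equiv.symm_apply_eq τ).mpr hib).symm
    · intro h; exact absurd (Finset.mem_univ _) h
  refine ⟨Qᴴ, ?_, ?_⟩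
  · rw [Matrix.mem_unitaryGroup_iff]
    simpa only [Matrix.star_eq_conjTranspose, Matrix.conjTranspose_conjTranspose] using hQ'Q
  · rw [Matrix.conjTranspose_conjTranspose]
    ext i j
    simp only [Matrix.mul_apply, hQ, Matrix.of_apply, Matrix.diagonal_apply,
      Matrix.conjTranspose_apply, apply_ite (starRingEnd ℂ), _root_.map_one, _root_.map_zero,
      ite_mul, one_mul, zero_mul, mul_ite, mul_one, mul_zero]
    simp only [Finset.sum_ite_eq, Finset.sum_ite_eq', Finset.mem_univ, if_true]
    by_cases h : i = j <;> simp [h, eq_comm]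

end AuxUE

lemma sum_thetaCoef (d : ℕ) : ∑ i : Fin (d ^ 2), thetaCoef d i = (d : ℂ) := by
  have hev : Even (d * (d - 1)) := by
    rcases d with _ | k
    · simp
    · simpa [Nat.succ_sub_one, mul_comm] using Nat.even_mul_succ_self k
  have h2a : d * (d - 1) / 2 * 2 = d * (d - 1) := Nat.div_mul_cancel hev.two_dvd
  have hbn : d * (d - 1) + d = d ^ 2 := by
    rcases d with _ | k
    · simp
    · simp only [Nat.succ_sub_one]; ring
  have hab : d * (d - 1) / 2 ≤ d * (d - 1) := Nat.div_le_self _ _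
  have hbn' : d * (d - 1) ≤ d ^ 2 := Nat.le.intro hbn
  unfold thetaCoef
  rw [Fin.sum_univ_eq_sum_range
    (fun i => if d * (d - 1) / 2 ≤ i ∧ i < d * (d - 1) then (-1 : ℂ) else 1) (d ^ 2)]
  rw [Finset.range_eq_Ico,
    ← Finset.sum_Ico_consecutive _ (Nat.zero_le (d * (d - 1) / 2)) (hab.trans hbn'),
    ← Finset.sum_Ico_consecutive _ hab hbn']
  have p1 : ∑ i ∈ Finset.Ico 0 (d * (d - 1) / 2),
      (if d * (d - 1) / 2 ≤ i ∧ i < d * (d - 1) then (-1 : ℂ) else 1)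
      = ((d * (d - 1) / 2 : ℕ) : ℂ) := by
    rw [Finset.sum_congr rfl (fun i hi => if_neg (fun hc =>
      absurd hc.1 (not_le.mpr (Finset.mem_Ico.mp hi).2)))]
    simp [Nat.card_Ico]
  have p2 : ∑ i ∈ Finset.Ico (d * (d - 1) / 2) (d * (d - 1)),
      (if d * (d - 1) / 2 ≤ i ∧ i < d * (d - 1) then (-1 : ℂ) else 1)
      = -(((d * (d - 1) - d * (d - 1) / 2 : ℕ)) : ℂ) := by
    rw [Finset.sum_congr rfl (fun i hi => if_pos ⟨(Finset.mem_Ico.mp hi).1,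
      (Finset.mem_Ico.mp hi).2⟩)]
    simp [Nat.card_Ico]
  have p3 : ∑ i ∈ Finset.Ico (d * (d - 1)) (d ^ 2),
      (if d * (d - 1) / 2 ≤ i ∧ i < d * (d - 1) then (-1 : ℂ) else 1)
      = ((d ^ 2 - d * (d - 1) : ℕ) : ℂ) := by
    rw [Finset.sum_congr rfl (fun i hi => if_neg (fun hc =>
      absurd hc.2 (not_lt.mpr (Finset.mem_Ico.mp hi).1)))]
    simp [Nat.card_Ico]
  rw [p1, p2, p3, Nat.cast_sub hab, Nat.cast_sub hbn']
  have c2a : ((d * (d - 1) / 2 : ℕ) : ℂ) * 2 = ((d * (d - 1) : ℕ) : ℂ) := by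
    exact_mod_cast congrArg (Nat.cast (R := ℂ)) h2a
  have cbn : ((d * (d - 1) : ℕ) : ℂ) + ((d : ℕ) : ℂ) = ((d ^ 2 : ℕ) : ℂ) := by
    exact_mod_cast congrArg (Nat.cast (R := ℂ)) hbn
  linear_combination c2a - cbn

/-- For every matrix `[m_{ij}]` unitarily equivalent to `θ̂ = diag(θ_i)` there is a
Hilbert–Schmidt orthonormal basis `{G_i}` of `M_d(ℂ)` such that
`Σ_{i,j} m_{ij} G_i a G_j† = aᵀ` for all `a`. -/
theorem exists_basis_of_unitarily_equivalent {d : ℕ}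
    (m : Matrix (Fin (d ^ 2)) (Fin (d ^ 2)) ℂ)
    (hm : ∃ U ∈ Matrix.unitaryGroup (Fin (d ^ 2)) ℂ,
      m = Uᴴ * Matrix.diagonal (thetaCoef d) * U) :
    ∃ G : Fin (d ^ 2) → Mat d,
      (∀ i j, ((G i)ᴴ * G j).trace = if i = j then 1 else 0) ∧
      Submodule.span ℂ (Set.range G) = ⊤ ∧
      ∀ a : Mat d, ∑ i : Fin (d ^ 2), ∑ j : Fin (d ^ 2), m i j • (G i * a * (G j)ᴴ) = aᵀ := by
  classical
  obtain ⟨U, hU, hmU⟩ := hm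
  set κ : Fin (d ^ 2) ≃ Fin d × Fin d :=
    (finCongr (pow_two d)).trans finProdFinEquiv.symm with hκ
  set σp : Equiv.Perm (Fin (d ^ 2)) :=
    κ.trans ((Equiv.prodComm (Fin d) (Fin d)).trans κ.symm) with hσp
  have hκσ : ∀ l, κ (σp l) = Prod.swap (κ l) := by
    intro l
    simp only [hσp, Equiv.trans_apply, Equiv.prodComm_apply, Equiv.apply_symm_apply]
  have hσσ : ∀ l, σp (σp l) = l := by
    intro l
    apply κ.injective
    rw [hκσ, hκσ, Prod.swap_swap]
  set S : Matrix (Fin (d ^ 2)) (Fin (d ^ 2)) ℂ :=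
    Matrix.of fun i j => if j = σp i then 1 else 0 with hS
  -- S is a Hermitian involution with trace d
  have hSh : S.IsHermitian := by
    ext i j
    simp only [Matrix.conjTranspose_apply, hS, Matrix.of_apply,
      apply_ite (starRingEnd ℂ), _root_.map_one, _root_.map_zero]
    by_cases h : i = σp j
    · have h' : j = σp i := by rw [h, hσσ]
      rw [if_pos h, if_pos h']
      exact star_one ℂ
    · have h' : ¬ j = σp i := fun hh => h (by rw [hh, hσσ])
      rw [if_neg h, if_neg h']
      exact star_zero ℂ
  have hS2 : S * S = 1 := by
    ext i j
    simp only [Matrix.mul_apply, hS, Matrix.of_apply, ite_mul, one_mul, zero_mul]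
    rw [Finset.sum_eq_single (σp i)]
    · simp [hσσ, Matrix.one_apply, eq_comm]
    · intro b _ hb; exact if_neg hb
    · intro h; exact absurd (Finset.mem_univ _) h
  have htrS : S.trace = (d : ℂ) := by
    have hre : ∀ i : Fin (d ^ 2), (if i = σp i then (1 : ℂ) else 0)
        = if (κ i).1 = (κ i).2 then 1 else 0 := by
      intro i
      congr 1
      apply propext
      constructor
      · intro h
        have h2 := congrArg κ h
        rw [hκσ] at h2
        have := congrArg Prod.fst h2
        simpa [Prod.swap] using this
      · intro h
        apply κ.injective
        rw [hκσ]
        exact Prod.ext (by simpa using h) (by simpa using h.symm)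
    rw [Matrix.trace]
    calc ∑ i, S.diag i = ∑ i : Fin (d ^ 2), if (κ i).1 = (κ i).2 then (1 : ℂ) else 0 := by
          refine Finset.sum_congr rfl fun i _ => ?_
          rw [show S.diag i = if i = σp i then (1 : ℂ) else 0 from rfl, hre i]
      _ = ∑ p : Fin d × Fin d, if p.1 = p.2 then (1 : ℂ) else 0 :=
          Equiv.sum_comp κ (fun p => if p.1 = p.2 then (1 : ℂ) else 0)
      _ = (d : ℂ) := by
          rw [Fintype.sum_prod_type]
          simp [Finset.sum_ite_eq]
  -- diagonalize S and match eigenvalues with thetaCoef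
  obtain ⟨ev, hev, V, hV, hSd⟩ := herm_invol_diag hSh hS2
  have hVV' : V * Vᴴ = 1 := by
    have := (Matrix.mem_unitaryGroup_iff).mp hV
    simpa [Matrix.star_eq_conjTranspose] using this
  have htrev : ∑ i, ev i = (d : ℂ) := by
    have : S.trace = ∑ i, ev i := by
      rw [hSd, Matrix.trace_mul_comm (Vᴴ * Matrix.diagonal ev) V, ← Matrix.mul_assoc,
        hVV', one_mul, Matrix.trace_diagonal]
    rw [← this, htrS]
  have hθpm : ∀ i, thetaCoef d i = 1 ∨ thetaCoef d i = -1 := by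
    intro i
    unfold thetaCoef
    split
    · exact Or.inr rfl
    · exact Or.inl rfl
  obtain ⟨τ, hτ⟩ := exists_perm_of_sum_eq hev hθpm (by rw [htrev, sum_thetaCoef])
  obtain ⟨P, hP, hPd⟩ := perm_conj (thetaCoef d) τ
  have hevd : Matrix.diagonal ev = Pᴴ * Matrix.diagonal (thetaCoef d) * P := by
    rw [show ev = fun i => thetaCoef d (τ i) from funext hτ]
    exact hPd
  -- m = Wᴴ * S * W for a unitary W
  set T : Matrix (Fin (d ^ 2)) (Fin (d ^ 2)) ℂ := P * V with hT
  have hTmem : T ∈ Matrix.unitaryGroup (Fin (d ^ 2)) ℂ := mul_mem hP hV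
  have hTT' : T * Tᴴ = 1 := by
    have := (Matrix.mem_unitaryGroup_iff).mp hTmem
    simpa [Matrix.star_eq_conjTranspose] using this
  have hT'T : Tᴴ * T = 1 := by
    have := (Matrix.mem_unitaryGroup_iff').mp hTmem
    simpa [Matrix.star_eq_conjTranspose] using this
  have hST : S = Tᴴ * Matrix.diagonal (thetaCoef d) * T := by
    rw [hSd, hevd, hT]
    simp only [Matrix.conjTranspose_mul, Matrix.mul_assoc]
  have hθT : Matrix.diagonal (thetaCoef d) = T * S * Tᴴ := by
    rw [hST]
    symm
    calc T * (Tᴴ * Matrix.diagonal (thetaCoef d) * T) * Tᴴ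
        = (T * Tᴴ) * Matrix.diagonal (thetaCoef d) * (T * Tᴴ) := by
          simp only [Matrix.mul_assoc]
      _ = Matrix.diagonal (thetaCoef d) := by rw [hTT']; simp
  set W : Matrix (Fin (d ^ 2)) (Fin (d ^ 2)) ℂ := Tᴴ * U with hW
  have hWmem : W ∈ Matrix.unitaryGroup (Fin (d ^ 2)) ℂ := by
    rw [hW]
    exact mul_mem (by simpa [Matrix.star_eq_conjTranspose] using Unitary.star_mem hTmem) hU
  have hWW' : W * Wᴴ = 1 := by
    have := (Matrix.mem_unitaryGroup_iff).mp hWmem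
    simpa [Matrix.star_eq_conjTranspose] using this
  have hW'W : Wᴴ * W = 1 := by
    have := (Matrix.mem_unitaryGroup_iff').mp hWmem
    simpa [Matrix.star_eq_conjTranspose] using this
  have hmW : m = Wᴴ * S * W := by
    rw [hmU, hθT, hW]
    simp only [Matrix.conjTranspose_mul, Matrix.conjTranspose_conjTranspose, Matrix.mul_assoc]
  have hWmW : W * m * Wᴴ = S := by
    rw [hmW]
    calc W * (Wᴴ * S * W) * Wᴴ = (W * Wᴴ) * S * (W * Wᴴ) := by simp only [Matrix.mul_assoc]
      _ = S := by rw [hWW']; simp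
  -- the basis
  set Eb : Fin (d ^ 2) → Mat d := fun l => Matrix.single (κ l).1 (κ l).2 1 with hEb
  have hEbT : ∀ l, (Eb l)ᴴ = Eb (σp l) := by
    intro l
    simp only [hEb]
    ext i j
    simp only [Matrix.conjTranspose_apply, Matrix.single, Matrix.of_apply, hκσ,
      apply_ite (starRingEnd ℂ), _root_.map_one, _root_.map_zero, Prod.fst_swap, Prod.snd_swap]
    by_cases h1 : (κ l).1 = j <;> by_cases h2 : (κ l).2 = i <;> simp [h1, h2, and_comm]
  have htrE : ∀ p q : Fin (d ^ 2), ((Eb p)ᴴ * Eb q).trace = if p = q then 1 else 0 := by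
    intro p q
    rw [hEbT]
    simp only [hEb, hκσ, Prod.fst_swap, Prod.snd_swap]
    by_cases h1 : (κ p).1 = (κ q).1
    · rw [h1, Matrix.single_mul_single_same, one_mul]
      by_cases h2 : (κ p).2 = (κ q).2
      · have : p = q := κ.injective (Prod.ext h1 h2)
        rw [h2, this, if_pos rfl]
        have : (Matrix.single (κ q).2 (κ q).2 (1 : ℂ)).trace = 1 := by
          rw [Matrix.trace]
          rw [Matrix.diag_single_same]
          simp
        exact this
      · rw [if_neg (fun hpq => h2 (by rw [hpq]))]
        rw [Matrix.trace]
        rw [Matrix.diag_single_of_ne _ _ _ h2]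
        simp
    · rw [Matrix.single_mul_single_of_ne (h := h1), if_neg (fun hpq => h1 (by rw [hpq])),
        Matrix.trace_zero]
  -- transposition identity for the std basis
  have hkey : ∀ a : Mat d, ∑ p : Fin (d ^ 2), ∑ q : Fin (d ^ 2),
      S p q • (Eb p * a * (Eb q)ᴴ) = aᵀ := by
    intro a
    have hinner : ∀ p, ∑ q : Fin (d ^ 2), S p q • (Eb p * a * (Eb q)ᴴ)
        = Eb p * a * Eb p := by
      intro p
      rw [Finset.sum_eq_single (σp p)]
      · rw [hEbT, hσσ, hS]
        simp
      · intro b _ hb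
        rw [hS]
        simp only [Matrix.of_apply]
        rw [if_neg hb, zero_smul]
      · intro h; exact absurd (Finset.mem_univ _) h
    rw [Finset.sum_congr rfl (fun p _ => hinner p)]
    have := Equiv.sum_comp κ
      (fun p : Fin d × Fin d => Matrix.single p.1 p.2 (1 : ℂ) * a *
        Matrix.single p.1 p.2 1)
    have hone : ∀ u v : Fin d, Matrix.single u v (1 : ℂ) * a *
        Matrix.single u v 1 = Matrix.single u v (a v u) := by
      intro u v
      ext r c
      simp only [Matrix.mul_apply, Matrix.single, Matrix.of_apply]
      by_cases hr : u = r <;> by_cases hc : v = c <;>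
        simp [hr, hc, ite_and, mul_ite, ite_mul, one_mul, zero_mul, mul_one, mul_zero,
          Finset.sum_ite_eq, Finset.sum_ite_eq']
    rw [hEb]
    simp only []
    rw [this]
    rw [Finset.sum_congr rfl (fun p _ => hone p.1 p.2)]
    ext r c
    rw [Matrix.sum_apply, Fintype.sum_prod_type]
    simp [Matrix.single, ite_and, Finset.sum_ite_eq, Finset.sum_ite_eq']
  -- the G basis
  refine ⟨fun i => ∑ l, W l i • Eb l, ?_, ?_, ?_⟩
  · intro i j
    have hexp : (∑ p, W p i • Eb p)ᴴ * (∑ q, W q j • Eb q)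
        = ∑ p, ∑ q, (starRingEnd ℂ (W p i) * W q j) • ((Eb p)ᴴ * Eb q) := by
      rw [Matrix.conjTranspose_sum]
      rw [Finset.sum_mul]
      refine Finset.sum_congr rfl fun p _ => ?_
      rw [Matrix.conjTranspose_smul, Finset.mul_sum]
      refine Finset.sum_congr rfl fun q _ => ?_
      rw [smul_mul_assoc, mul_smul_comm, smul_smul, RCLike.star_def]
    rw [hexp, Matrix.trace_sum]
    have : ∀ p, (∑ q, (starRingEnd ℂ (W p i) * W q j) • ((Eb p)ᴴ * Eb q)).trace
        = starRingEnd ℂ (W p i) * W p j := by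
      intro p
      rw [Matrix.trace_sum]
      rw [Finset.sum_congr rfl (fun q _ => by rw [Matrix.trace_smul, smul_eq_mul, htrE])]
      simp only [mul_ite, mul_one, mul_zero]
      rw [Finset.sum_eq_single p]
      · rw [if_pos rfl]
      · intro b _ hb; rw [if_neg (fun h => hb h.symm)]
      · intro h; exact absurd (Finset.mem_univ _) h
    rw [Finset.sum_congr rfl (fun p _ => this p)]
    have : ∑ p, starRingEnd ℂ (W p i) * W p j = (Wᴴ * W) i j := by
      rw [Matrix.mul_apply]
      simp [Matrix.conjTranspose_apply, RCLike.star_def]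
    rw [this, hW'W, Matrix.one_apply]
  · rw [eq_top_iff, ← (Matrix.stdBasis ℂ (Fin d) (Fin d)).span_eq, Submodule.span_le]
    rintro x ⟨⟨i0, j0⟩, rfl⟩
    have hx : (Matrix.stdBasis ℂ (Fin d) (Fin d)) (i0, j0) = Eb (κ.symm (i0, j0)) := by
      rw [Matrix.stdBasis_eq_single, hEb]
      simp
    rw [hx]
    have hrec : Eb (κ.symm (i0, j0)) = ∑ i, starRingEnd ℂ (W (κ.symm (i0, j0)) i) •
        (∑ l, W l i • Eb l) := by
      set l0 := κ.symm (i0, j0)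
      have : ∀ i, starRingEnd ℂ (W l0 i) • (∑ l, W l i • Eb l)
          = ∑ l, (W l i * starRingEnd ℂ (W l0 i)) • Eb l := by
        intro i
        rw [Finset.smul_sum]
        exact Finset.sum_congr rfl fun l _ => by rw [smul_smul, mul_comm]
      rw [Finset.sum_congr rfl (fun i _ => this i), Finset.sum_comm]
      have : ∀ l, ∑ i, (W l i * starRingEnd ℂ (W l0 i)) • Eb l
          = ((W * Wᴴ) l l0) • Eb l := by
        intro l
        rw [← Finset.sum_smul, Matrix.mul_apply]
        congr 1
        try simp [Matrix.conjTranspose_apply, RCLike.star_def]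
      rw [Finset.sum_congr rfl (fun l _ => this l), hWW']
      rw [Finset.sum_eq_single l0]
      · simp
      · intro b _ hb
        rw [Matrix.one_apply_ne hb, zero_smul]
      · intro h; exact absurd (Finset.mem_univ _) h
    rw [hrec]
    exact Submodule.sum_mem _ fun i _ => Submodule.smul_mem _ _
      (Submodule.subset_span ⟨i, rfl⟩)
  · intro a
    have hGexp : ∀ i j, (∑ p, W p i • Eb p) * a * (∑ q, W q j • Eb q)ᴴ
        = ∑ p, ∑ q, (W p i * starRingEnd ℂ (W q j)) • (Eb p * a * (Eb q)ᴴ) := by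
      intro i j
      rw [Matrix.conjTranspose_sum, Finset.sum_mul, Finset.sum_mul]
      refine Finset.sum_congr rfl fun p _ => ?_
      rw [smul_mul_assoc, Finset.mul_sum]
      refine Finset.sum_congr rfl fun q _ => ?_
      rw [Matrix.conjTranspose_smul, smul_mul_assoc, mul_smul_comm, smul_smul, RCLike.star_def]
    have hswap : ∀ f : Fin (d ^ 2) → Fin (d ^ 2) → Fin (d ^ 2) → Fin (d ^ 2) → Mat d,
        (∑ i, ∑ j, ∑ p, ∑ q, f i j p q) = ∑ p, ∑ q, ∑ i, ∑ j, f i j p q := by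
      intro f
      calc (∑ i, ∑ j, ∑ p, ∑ q, f i j p q)
          = ∑ i, ∑ p, ∑ j, ∑ q, f i j p q :=
            Finset.sum_congr rfl fun i _ => Finset.sum_comm
        _ = ∑ p, ∑ i, ∑ j, ∑ q, f i j p q := Finset.sum_comm
        _ = ∑ p, ∑ i, ∑ q, ∑ j, f i j p q :=
            Finset.sum_congr rfl fun p _ => Finset.sum_congr rfl fun i _ => Finset.sum_comm
        _ = ∑ p, ∑ q, ∑ i, ∑ j, f i j p q :=
            Finset.sum_congr rfl fun p _ => Finset.sum_comm
    calc (∑ i, ∑ j, m i j • ((∑ p, W p i • Eb p) * a * (∑ q, W q j • Eb q)ᴴ))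
        = ∑ i, ∑ j, ∑ p, ∑ q, (m i j * (W p i * starRingEnd ℂ (W q j))) •
            (Eb p * a * (Eb q)ᴴ) := by
          refine Finset.sum_congr rfl fun i _ => Finset.sum_congr rfl fun j _ => ?_
          rw [hGexp i j, Finset.smul_sum]
          refine Finset.sum_congr rfl fun p _ => ?_
          rw [Finset.smul_sum]
          refine Finset.sum_congr rfl fun q _ => ?_
          rw [smul_smul]
      _ = ∑ p, ∑ q, ∑ i, ∑ j, (m i j * (W p i * starRingEnd ℂ (W q j))) •
            (Eb p * a * (Eb q)ᴴ) := hswap _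
      _ = ∑ p, ∑ q, (∑ i, ∑ j, m i j * (W p i * starRingEnd ℂ (W q j))) •
            (Eb p * a * (Eb q)ᴴ) := by
          refine Finset.sum_congr rfl fun p _ => Finset.sum_congr rfl fun q _ => ?_
          rw [Finset.sum_smul]
          refine Finset.sum_congr rfl fun i _ => ?_
          rw [Finset.sum_smul]
      _ = ∑ p, ∑ q, ((W * m * Wᴴ) p q) • (Eb p * a * (Eb q)ᴴ) := by
          refine Finset.sum_congr rfl fun p _ => Finset.sum_congr rfl fun q _ => ?_
          congr 1
          rw [Matrix.mul_apply]
          simp only [Matrix.mul_apply, Matrix.conjTranspose_apply, Finset.sum_mul,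
            RCLike.star_def]
          rw [Finset.sum_comm]
          exact Finset.sum_congr rfl fun i _ => Finset.sum_congr rfl fun j _ => by ring
      _ = ∑ p, ∑ q, S p q • (Eb p * a * (Eb q)ᴴ) := by rw [hWmW]
      _ = aᵀ := hkey a
end

section
/- If φ is a completely copositive linear map on M_d(ℂ), i.e. φ = θ ∘ ψ for some completely positive ψ where θ is the transposition map, then its exponential e^φ is decomposable. -/
open Matrix Set Filter
open scoped ComplexConjugate ComplexOrder

section Auxiliary

open scoped ComplexOrder

variable {d : ℕ}

/-- `choiMatrix` as a linear map. -/
noncomputable def choiLin (d : ℕ) :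
    MatMap d →ₗ[ℂ] Matrix (Fin d × Fin d) (Fin d × Fin d) ℂ where
  toFun := choiMatrix
  map_add' f g := by ext p q; simp [choiMatrix]
  map_smul' c f := by ext p q; simp [choiMatrix]

/-- Kraus map `a ↦ K a Kᴴ`. -/
noncomputable def krausMap (K : Mat d) : MatMap d where
  toFun a := K * a * Kᴴ
  map_add' a b := by simp [Matrix.mul_add, Matrix.add_mul]
  map_smul' c a := by simp [Matrix.mul_smul, Matrix.smul_mul]

lemma krausMap_apply (K a : Mat d) : krausMap K a = K * a * Kᴴ := rfl

lemma krausMap_entry (K : Mat d) (i k j l : Fin d) :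
    krausMap K (Matrix.single i k 1) j l = K j i * (starRingEnd ℂ) (K l k) := by
  simp [krausMap_apply, Matrix.mul_apply, Matrix.single, Matrix.conjTranspose_apply,
    ite_and, Finset.mul_sum, Finset.sum_ite_eq, Finset.sum_ite_eq']

lemma choiMatrix_krausMap (K : Mat d) :
    choiMatrix (krausMap K) =
      (Matrix.of fun (_ : Unit) (p : Fin d × Fin d) => (starRingEnd ℂ) (K p.2 p.1))ᴴ *
      (Matrix.of fun (_ : Unit) (p : Fin d × Fin d) => (starRingEnd ℂ) (K p.2 p.1)) := by
  ext p q
  simp [choiMatrix, krausMap_entry, Matrix.mul_apply, Matrix.conjTranspose_apply]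

lemma isCP_krausMap (K : Mat d) : IsCP (krausMap K) := by
  rw [IsCP, choiMatrix_krausMap]
  exact Matrix.posSemidef_conjTranspose_mul_self _

lemma isCP_sum {ι : Type*} (s : Finset ι) (f : ι → MatMap d)
    (h : ∀ i ∈ s, IsCP (f i)) : IsCP (∑ i ∈ s, f i) := by
  have hs : choiMatrix (∑ i ∈ s, f i) = ∑ i ∈ s, choiMatrix (f i) :=
    map_sum (choiLin d) f s
  rw [IsCP, hs]
  exact Finset.sum_induction _ _ (fun a b ha hb => ha.add hb) Matrix.PosSemidef.zero h

open scoped MatrixOrder in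
lemma posSemidef_exists_conjTranspose_mul {n' : Type*} [Fintype n'] {A : Matrix n' n' ℂ}
    (hA : A.PosSemidef) : ∃ B : Matrix n' n' ℂ, A = Bᴴ * B := by
  classical
  obtain ⟨B, hB⟩ := CStarAlgebra.nonneg_iff_eq_star_mul_self.mp hA.nonneg
  exact ⟨B, by rw [hB, Matrix.star_eq_conjTranspose]⟩

lemma exists_kraus {φ : MatMap d} (h : IsCP φ) :
    ∃ K : (Fin d × Fin d) → Mat d, φ = ∑ m, krausMap (K m) := by
  obtain ⟨B, hB⟩ := posSemidef_exists_conjTranspose_mul h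
  refine ⟨fun m => Matrix.of fun j i => (starRingEnd ℂ) (B m (i, j)), ?_⟩
  apply (Matrix.stdBasis ℂ (Fin d) (Fin d)).ext
  rintro ⟨i, k⟩
  rw [Matrix.stdBasis_eq_single]
  ext j l
  have hent : φ (Matrix.single i k 1) j l = choiMatrix φ (i, j) (k, l) := rfl
  rw [hent, hB]
  simp [LinearMap.sum_apply, Matrix.sum_apply, krausMap_entry, Matrix.mul_apply,
    Matrix.conjTranspose_apply, mul_comm]

lemma krausMap_comp (K L : Mat d) :
    krausMap K ∘ₗ krausMap L = krausMap (K * L) := by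
  ext a
  simp only [LinearMap.comp_apply, krausMap_apply, Matrix.conjTranspose_mul]
  noncomm_ring

lemma isCP_comp {φ ψ : MatMap d} (hφ : IsCP φ) (hψ : IsCP ψ) : IsCP (φ ∘ₗ ψ) := by
  obtain ⟨K, rfl⟩ := exists_kraus hφ
  obtain ⟨L, rfl⟩ := exists_kraus hψ
  have hcomp : (∑ m, krausMap (K m)) ∘ₗ (∑ r, krausMap (L r)) =
      ∑ m, ∑ r, krausMap (K m * L r) := by
    simp_rw [← krausMap_comp, ← Module.End.mul_eq_comp, Finset.sum_mul, Finset.mul_sum]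
  rw [hcomp]
  exact isCP_sum _ _ fun m _ => isCP_sum _ _ fun r _ => isCP_krausMap _

lemma isCP_one : IsCP (1 : MatMap d) := by
  rw [IsCP]
  have h1 : choiMatrix (1 : MatMap d) =
      (Matrix.of fun (_ : Unit) (p : Fin d × Fin d) => if p.1 = p.2 then (1:ℂ) else 0)ᴴ *
      (Matrix.of fun (_ : Unit) (p : Fin d × Fin d) => if p.1 = p.2 then (1:ℂ) else 0) := by
    ext p q
    simp [choiMatrix, Matrix.mul_apply, Matrix.conjTranspose_apply, Matrix.single,
      Module.End.one_apply, ite_and, apply_ite (starRingEnd ℂ)]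
    aesop
  rw [h1]
  exact Matrix.posSemidef_conjTranspose_mul_self _

lemma transposeMap_apply (a : Mat d) : transposeMap d a = aᵀ := rfl

lemma theta_theta : transposeMap d ∘ₗ transposeMap d = LinearMap.id := by
  ext a i j; simp [transposeMap_apply]

lemma choi_theta_conj (χ : MatMap d) :
    choiMatrix (transposeMap d ∘ₗ χ ∘ₗ transposeMap d) = (choiMatrix χ)ᵀ := by
  ext p q
  have hsb : (Matrix.single p.1 q.1 (1:ℂ))ᵀ = Matrix.single q.1 p.1 1 := by
    ext i j; simp [Matrix.single, Matrix.transpose_apply, and_comm]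
  show ((χ ((Matrix.single p.1 q.1 (1:ℂ))ᵀ))ᵀ) p.2 q.2 = choiMatrix χ q p
  rw [hsb]
  rfl

lemma isCP_theta_conj {χ : MatMap d} (h : IsCP χ) :
    IsCP (transposeMap d ∘ₗ χ ∘ₗ transposeMap d) := by
  rw [IsCP, choi_theta_conj]
  exact h.transpose

lemma posSemidef_smul_real {n' : Type*} [Fintype n'] {X : Matrix n' n' ℂ}
    (h : X.PosSemidef) {c : ℝ} (hc : 0 ≤ c) : ((c : ℂ) • X).PosSemidef := by
  rw [Matrix.posSemidef_iff_dotProduct_mulVec] at h ⊢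
  constructor
  · show ((c:ℂ) • X)ᴴ = (c:ℂ) • X
    rw [Matrix.conjTranspose_smul, h.1]
    congr 1
    simp [Complex.star_def, Complex.conj_ofReal]
  · intro x
    rw [Matrix.smul_mulVec, dotProduct_smul, smul_eq_mul]
    exact mul_nonneg (Complex.zero_le_real.mpr hc) (h.2 x)

lemma posSemidef_factorialInv_smul {n' : Type*} [Fintype n'] {X : Matrix n' n' ℂ}
    (h : X.PosSemidef) (n : ℕ) : (((n.factorial : ℂ))⁻¹ • X).PosSemidef := by
  have h2 := posSemidef_smul_real h (c := ((n.factorial : ℝ))⁻¹)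
    (inv_nonneg.mpr (Nat.cast_nonneg _))
  have h1 : ((((n.factorial : ℝ))⁻¹ : ℝ) : ℂ) = ((n.factorial : ℂ))⁻¹ := by
    push_cast
    ring
  rwa [h1] at h2

lemma isClosed_posSemidef {n' : Type*} [Fintype n'] :
    IsClosed {M : Matrix n' n' ℂ | M.PosSemidef} := by
  have hherm : IsClosed {M : Matrix n' n' ℂ | M.IsHermitian} := by
    have hc : Continuous fun M : Matrix n' n' ℂ => Mᴴ := by
      apply continuous_pi; intro i; apply continuous_pi; intro j
      exact Continuous.star ((continuous_apply i).comp (continuous_apply j))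
    exact isClosed_eq hc continuous_id
  have hquad : ∀ x : n' → ℂ,
      IsClosed {M : Matrix n' n' ℂ | 0 ≤ dotProduct (star x) (M *ᵥ x)} := by
    intro x
    have hv : Continuous fun M : Matrix n' n' ℂ => dotProduct (star x) (M *ᵥ x) := by
      have : (fun M : Matrix n' n' ℂ => dotProduct (star x) (M *ᵥ x)) =
          fun M => ∑ i, star (x i) * ∑ j, M i j * x j := by
        funext M; simp [dotProduct, Matrix.mulVec]
      rw [this]
      refine continuous_finset_sum _ fun i _ => Continuous.mul continuous_const ?_
      exact continuous_finset_sum _ fun j _ =>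
        Continuous.mul ((continuous_apply j).comp (continuous_apply i)) continuous_const
    have hset : IsClosed {z : ℂ | 0 ≤ z} := by
      have : {z : ℂ | 0 ≤ z} = Complex.re ⁻¹' Ici 0 ∩ {z : ℂ | z.im = 0} := by
        ext z
        simp only [mem_setOf_eq, Complex.le_def, mem_inter_iff, mem_preimage, mem_Ici]
        constructor
        · rintro ⟨h1, h2⟩; exact ⟨by simpa using h1, by simpa using h2.symm⟩
        · rintro ⟨h1, h2⟩; exact ⟨by simpa using h1, by simp [h2]⟩
      rw [this]
      exact (isClosed_Ici.preimage Complex.continuous_re).inter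
        (isClosed_eq Complex.continuous_im continuous_const)
    exact hset.preimage hv
  have hset : {M : Matrix n' n' ℂ | M.PosSemidef} =
      {M : Matrix n' n' ℂ | M.IsHermitian} ∩
      ⋂ x : n' → ℂ, {M : Matrix n' n' ℂ | 0 ≤ dotProduct (star x) (M *ᵥ x)} := by
    ext M
    simp only [mem_setOf_eq, mem_inter_iff, mem_iInter, Matrix.posSemidef_iff_dotProduct_mulVec]
  rw [hset]
  exact hherm.inter (isClosed_iInter hquad)

lemma toMatrix_pow (f : MatMap d) (n : ℕ) :
    LinearMap.toMatrix (Matrix.stdBasis ℂ (Fin d) (Fin d)) (Matrix.stdBasis ℂ (Fin d) (Fin d))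
        (f ^ n) =
      (LinearMap.toMatrix (Matrix.stdBasis ℂ (Fin d) (Fin d))
        (Matrix.stdBasis ℂ (Fin d) (Fin d)) f) ^ n := by
  induction n with
  | zero => simp [pow_zero, Module.End.one_eq_id, LinearMap.toMatrix_id]
  | succ n ih =>
    rw [pow_succ, pow_succ, Module.End.mul_eq_comp, LinearMap.toMatrix_comp _
      (Matrix.stdBasis ℂ (Fin d) (Fin d)), ih]

end Auxiliary

/-- Proposition 18: the exponential of a completely copositive map is decomposable. -/
theorem isDecomposable_endExp_of_coCP {d : ℕ} (φ : MatMap d)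
    (hφ : ∃ ψ : MatMap d, IsCP ψ ∧ φ = transposeMap d ∘ₗ ψ) :
    IsDecomposable (endExp φ) := by
  classical
  obtain ⟨ψ, hψ, hφθ⟩ := hφ
  set b := Matrix.stdBasis ℂ (Fin d) (Fin d) with hb
  set e := LinearMap.toMatrix b b with he
  set M := e φ with hM
  set T := e (transposeMap d) with hT
  letI : SeminormedRing (Matrix (Fin d × Fin d) (Fin d × Fin d) ℂ) :=
    Matrix.linftyOpSemiNormedRing
  letI : NormedRing (Matrix (Fin d × Fin d) (Fin d × Fin d) ℂ) :=
    Matrix.linftyOpNormedRing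
  letI : NormedAlgebra ℂ (Matrix (Fin d × Fin d) (Fin d × Fin d) ℂ) :=
    Matrix.linftyOpNormedAlgebra
  set P := NormedSpace.exp M with hP
  set Q := NormedSpace.exp (-M) with hQ
  set A := (2⁻¹ : ℂ) • (P + Q) with hA
  set Bm := (2⁻¹ : ℂ) • (T * (P - Q)) with hBm
  -- CP facts for powers
  have h2 : IsCP (φ ^ 2) := by
    have hφ2 : φ ^ 2 = (transposeMap d ∘ₗ ψ ∘ₗ transposeMap d) ∘ₗ ψ := by
      rw [pow_two, Module.End.mul_eq_comp, hφθ]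
      ext a : 1
      rfl
    rw [hφ2]
    exact isCP_comp (isCP_theta_conj hψ) hψ
  have heven : ∀ k : ℕ, IsCP (φ ^ (2 * k)) := by
    intro k
    induction k with
    | zero => simpa using isCP_one
    | succ k ih =>
      have hsplit : φ ^ (2 * (k + 1)) = φ ^ (2 * k) * φ ^ 2 := by
        rw [show 2 * (k + 1) = 2 * k + 2 by ring, pow_add]
      rw [hsplit, Module.End.mul_eq_comp]
      exact isCP_comp ih h2
  have hthφ : transposeMap d ∘ₗ φ = ψ := by
    rw [hφθ, ← LinearMap.comp_assoc, theta_theta, LinearMap.id_comp]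
  have hodd : ∀ k : ℕ, IsCP (transposeMap d ∘ₗ φ ^ (2 * k + 1)) := by
    intro k
    have hsplit : transposeMap d ∘ₗ φ ^ (2 * k + 1) = ψ ∘ₗ φ ^ (2 * k) := by
      rw [pow_succ', Module.End.mul_eq_comp, ← LinearMap.comp_assoc, hthφ]
    rw [hsplit]
    exact isCP_comp hψ (heven k)
  -- power formula through toMatrix
  have hpow : ∀ n : ℕ, e (φ ^ n) = M ^ n := fun n => toMatrix_pow φ n
  -- the two series
  have hciM : HasSum (fun n : ℕ => ((n.factorial : ℂ))⁻¹ • M ^ n) P := by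
    have h := NormedSpace.expSeries_hasSum_exp (𝕂 := ℂ) M
    simp only [NormedSpace.expSeries_apply_eq] at h
    exact h
  have hciN : HasSum (fun n : ℕ => ((n.factorial : ℂ))⁻¹ • (-M) ^ n) Q := by
    have h := NormedSpace.expSeries_hasSum_exp (𝕂 := ℂ) (-M)
    simp only [NormedSpace.expSeries_apply_eq] at h
    exact h
  have hTT : T * T = 1 := by
    rw [hT, he, ← LinearMap.toMatrix_comp b b b, theta_theta, LinearMap.toMatrix_id]
  -- the CP part ψ₁
  set L₁ : Matrix (Fin d × Fin d) (Fin d × Fin d) ℂ →ₗ[ℂ]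
      Matrix (Fin d × Fin d) (Fin d × Fin d) ℂ :=
    (choiLin d).comp e.symm.toLinearMap with hL₁
  have hL₁app : ∀ X, L₁ X = choiMatrix (e.symm X) := fun X => rfl
  have hL₁cont : Continuous L₁ := L₁.continuous_of_finiteDimensional
  have hsum₁ : HasSum
      (fun n : ℕ => L₁ ((2⁻¹ : ℂ) •
        (((n.factorial : ℂ))⁻¹ • M ^ n + ((n.factorial : ℂ))⁻¹ • (-M) ^ n))) (L₁ A) := by
    have h := ((hciM.add hciN).const_smul (2⁻¹ : ℂ)).map L₁.toAddMonoidHom hL₁cont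
    simpa only [Function.comp_def, LinearMap.toAddMonoidHom_coe, hA] using h
  have hterm₁ : ∀ n : ℕ, (L₁ ((2⁻¹ : ℂ) •
      (((n.factorial : ℂ))⁻¹ • M ^ n + ((n.factorial : ℂ))⁻¹ • (-M) ^ n))).PosSemidef := by
    intro n
    rcases Nat.even_or_odd n with hn | hn
    · have harith : (2⁻¹ : ℂ) •
          (((n.factorial : ℂ))⁻¹ • M ^ n + ((n.factorial : ℂ))⁻¹ • (-M) ^ n) =
          ((n.factorial : ℂ))⁻¹ • M ^ n := by
        rw [hn.neg_pow, ← add_smul, smul_smul]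
        congr 1
        ring
      have hphi : L₁ (M ^ n) = choiMatrix (φ ^ n) := by
        rw [hL₁app, ← hpow n, e.symm_apply_apply]
      rw [harith, LinearMap.map_smul, hphi]
      obtain ⟨k, hk⟩ := hn
      have hcp : IsCP (φ ^ n) := by
        rw [hk, ← two_mul]
        exact heven k
      exact posSemidef_factorialInv_smul hcp n
    · have h0 : (2⁻¹ : ℂ) •
          (((n.factorial : ℂ))⁻¹ • M ^ n + ((n.factorial : ℂ))⁻¹ • (-M) ^ n) = 0 := by
        rw [hn.neg_pow]
        simp
      rw [h0, map_zero]
      exact Matrix.PosSemidef.zero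
  have hCP₁ : IsCP (e.symm A) := by
    have hmem : L₁ A ∈ {X : Matrix (Fin d × Fin d) (Fin d × Fin d) ℂ | X.PosSemidef} := by
      refine isClosed_posSemidef.mem_of_tendsto hsum₁.tendsto_sum_nat
        (Eventually.of_forall fun N => ?_)
      exact Finset.sum_induction _ _ (fun a b ha hb => ha.add hb) Matrix.PosSemidef.zero
        (fun n _ => hterm₁ n)
    exact hmem
  -- the CP part ψ₂
  set L₂ : Matrix (Fin d × Fin d) (Fin d × Fin d) ℂ →ₗ[ℂ]
      Matrix (Fin d × Fin d) (Fin d × Fin d) ℂ :=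
    (choiLin d).comp (e.symm.toLinearMap.comp (LinearMap.mulLeft ℂ T)) with hL₂
  have hL₂app : ∀ X, L₂ X = choiMatrix (e.symm (T * X)) := fun X => rfl
  have hL₂cont : Continuous L₂ := L₂.continuous_of_finiteDimensional
  have hL₂Bm : L₂ ((2⁻¹ : ℂ) • (P - Q)) = choiMatrix (e.symm Bm) := by
    rw [hL₂app, hBm, mul_smul_comm]
  have hsum₂ : HasSum
      (fun n : ℕ => L₂ ((2⁻¹ : ℂ) •
        (((n.factorial : ℂ))⁻¹ • M ^ n - ((n.factorial : ℂ))⁻¹ • (-M) ^ n)))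
      (choiMatrix (e.symm Bm)) := by
    have h := ((hciM.sub hciN).const_smul (2⁻¹ : ℂ)).map L₂.toAddMonoidHom hL₂cont
    simpa only [Function.comp_def, LinearMap.toAddMonoidHom_coe, hL₂Bm] using h
  have hterm₂ : ∀ n : ℕ, (L₂ ((2⁻¹ : ℂ) •
      (((n.factorial : ℂ))⁻¹ • M ^ n - ((n.factorial : ℂ))⁻¹ • (-M) ^ n))).PosSemidef := by
    intro n
    rcases Nat.even_or_odd n with hn | hn
    · have h0 : (2⁻¹ : ℂ) •
          (((n.factorial : ℂ))⁻¹ • M ^ n - ((n.factorial : ℂ))⁻¹ • (-M) ^ n) = 0 := by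
        rw [hn.neg_pow]
        simp
      rw [h0, map_zero]
      exact Matrix.PosSemidef.zero
    · have harith : (2⁻¹ : ℂ) •
          (((n.factorial : ℂ))⁻¹ • M ^ n - ((n.factorial : ℂ))⁻¹ • (-M) ^ n) =
          ((n.factorial : ℂ))⁻¹ • M ^ n := by
        rw [hn.neg_pow, smul_neg, sub_neg_eq_add, ← add_smul, smul_smul]
        congr 1
        ring
      have hTM : T * M ^ n = e (transposeMap d ∘ₗ φ ^ n) := by
        rw [he, LinearMap.toMatrix_comp b b b, ← he, ← hT, hpow n]
      have hphi : L₂ (M ^ n) = choiMatrix (transposeMap d ∘ₗ φ ^ n) := by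
        rw [hL₂app, hTM, e.symm_apply_apply]
      rw [harith, LinearMap.map_smul, hphi]
      obtain ⟨k, hk⟩ := hn
      have hcp : IsCP (transposeMap d ∘ₗ φ ^ n) := by
        rw [hk]
        exact hodd k
      exact posSemidef_factorialInv_smul hcp n
  have hCP₂ : IsCP (e.symm Bm) := by
    refine isClosed_posSemidef.mem_of_tendsto hsum₂.tendsto_sum_nat
      (Eventually.of_forall fun N => ?_)
    exact Finset.sum_induction _ _ (fun a b ha hb => ha.add hb) Matrix.PosSemidef.zero
      (fun n _ => hterm₂ n)
  -- conclude
  refine ⟨e.symm A, e.symm Bm, hCP₁, hCP₂, ?_⟩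
  apply e.injective
  rw [map_add, e.apply_symm_apply, he, LinearMap.toMatrix_comp b b b, ← he, ← hT,
    e.apply_symm_apply]
  have hexp : e (endExp φ) = P := by
    simp only [endExp, ← hb, ← he, ← hM, ← hP]
    exact e.apply_symm_apply _
  rw [hexp, hA, hBm, mul_smul_comm, ← mul_assoc, hTT, one_mul]
  module
end
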